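/- arXiv:1306.1094 — 6 statements merged into one kernel-verified Lean document; each statement's English description precedes it below -/
import Mathlib

section
/- For every complex number ζ with (Re ζ)² ≥ (Im ζ)² and every natural number N ≥ 1, the infinite product satisfies |P(ζ)| ≥ |ζ|^(2N) / (μ_1 · μ_2 · ⋯ · μ_N)². -/
/-!
For `w := ζ² / μ_p²` the hypothesis `(Im ζ)² ≤ (Re ζ)²` says `Re w ≥ 0`, and then
`|1 + w| ≥ max(1, |w|)`. Since `∑ |w_p| < ∞` the product converges, and bounding the first `N`
factors below by `|w_p| = |ζ|² / μ_p²` and all the others by `1` gives the estimate.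
-/

open Finset

theorem Multipliable.prod_le_tprod_of_nonneg_of_one_le {ι R : Type*} [CommMonoidWithZero R]
    [PartialOrder R] [ZeroLEOneClass R] [PosMulMono R] [TopologicalSpace R]
    [OrderClosedTopology R] {f : ι → R} (hf : Multipliable f) (s : Finset ι)
    (hs₀ : ∀ i ∈ s, 0 ≤ f i) (hs₁ : ∀ i ∉ s, 1 ≤ f i) :
    ∏ i ∈ s, f i ≤ ∏' i, f i := by
  refine ge_of_tendsto hf.hasProd (Filter.eventually_atTop.2 ⟨s, fun t hst => ?_⟩)
  exact prod_le_prod_of_subset_of_one_le hst hs₀ fun i _ hi => hs₁ i hi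

namespace Complex

theorem one_le_norm_one_add_of_re_nonneg {z : ℂ} (hz : 0 ≤ z.re) : 1 ≤ ‖1 + z‖ :=
  calc (1 : ℝ) ≤ (1 + z).re := by simpa using hz
    _ ≤ ‖1 + z‖ := re_le_norm _

theorem norm_le_norm_one_add_of_re_nonneg {z : ℂ} (hz : 0 ≤ z.re) :
    ‖z‖ ≤ ‖1 + z‖ := by
  have h : normSq z ≤ normSq (1 + z) := by
    rw [normSq_add]
    simp only [normSq_one, one_mul, conj_re]
    linarith
  rw [normSq_eq_norm_sq, normSq_eq_norm_sq] at h
  exact (pow_le_pow_iff_left₀ (norm_nonneg _) (norm_nonneg _) two_ne_zero).1 h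

theorem re_sq_nonneg_of_im_sq_le {z : ℂ} (hz : z.im ^ 2 ≤ z.re ^ 2) : 0 ≤ (z ^ 2).re := by
  rw [sq z, mul_re]
  nlinarith

theorem re_div_ofReal_sq_nonneg {z : ℂ} (hz : 0 ≤ z.re) (r : ℝ) :
    0 ≤ (z / (r : ℂ) ^ 2).re := by
  rw [← ofReal_pow, div_ofReal_re]
  positivity

theorem norm_div_ofReal_sq (z : ℂ) (r : ℝ) : ‖z / (r : ℂ) ^ 2‖ = ‖z‖ / r ^ 2 := by
  simp [norm_pow, norm_real, sq_abs]

end Complex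

-- `μ p` is the paper's `μ_{p+1}`, so `range N` runs over `μ_1, …, μ_N`.
theorem abs_canonical_product_lower_bound_general (μ : ℕ → ℝ)
    (hμsum : Summable fun p => 1 / (μ p) ^ 2)
    (ζ : ℂ) (hζ : ζ.im ^ 2 ≤ ζ.re ^ 2) (N : ℕ) :
    ‖ζ‖ ^ (2 * N) / (∏ p ∈ Finset.range N, μ p) ^ 2 ≤
      ‖∏' p : ℕ, (1 + ζ ^ 2 / (μ p : ℂ) ^ 2)‖ := by
  set w : ℕ → ℂ := fun p => ζ ^ 2 / (μ p : ℂ) ^ 2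
  have hw_re (p : ℕ) : 0 ≤ (w p).re :=
    Complex.re_div_ofReal_sq_nonneg (Complex.re_sq_nonneg_of_im_sq_le hζ) (μ p)
  have hw_summable : Summable w := by
    refine ((Complex.summable_ofReal.2 hμsum).mul_left (ζ ^ 2)).congr fun p => ?_
    simp [w, div_eq_mul_inv]
  have hmul : Multipliable fun p => 1 + w p := Complex.multipliable_one_add_of_summable hw_summable
  calc ‖ζ‖ ^ (2 * N) / (∏ p ∈ range N, μ p) ^ 2 = ∏ p ∈ range N, ‖w p‖ := by
        simp only [w, Complex.norm_div_ofReal_sq, norm_pow, prod_div_distrib, prod_const,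
          card_range, prod_pow, pow_mul]
    _ ≤ ∏ p ∈ range N, ‖1 + w p‖ :=
        prod_le_prod (fun _ _ => norm_nonneg _)
          fun p _ => Complex.norm_le_norm_one_add_of_re_nonneg (hw_re p)
    _ ≤ ∏' p, ‖1 + w p‖ :=
        hmul.norm.prod_le_tprod_of_nonneg_of_one_le _ (fun _ _ => norm_nonneg _)
          fun p _ => Complex.one_le_norm_one_add_of_re_nonneg (hw_re p)
    _ = ‖∏' p, (1 + w p)‖ := hmul.norm_tprod.symm

/-- Let `(μ_p)` be a sequence of positive reals with `∑ 1/μ_p² < ∞` and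
`P(ζ) = ∏_{p} (1 + ζ²/μ_p²)`. For every `ζ ∈ ℂ` with `(Re ζ)² ≥ (Im ζ)²` and every `N ≥ 1`,
`|P(ζ)| ≥ |ζ|^(2N) / (μ_1 ⋯ μ_N)²`. (Here the sequence is indexed by `ℕ`, with `μ p`
playing the role of `μ_{p+1}`.) -/
theorem abs_canonical_product_lower_bound (μ : ℕ → ℝ) (hμpos : ∀ p, 0 < μ p)
    (hμsum : Summable fun p => 1 / (μ p) ^ 2)
    (ζ : ℂ) (hζ : ζ.im ^ 2 ≤ ζ.re ^ 2) (N : ℕ) (hN : 1 ≤ N) :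
    ‖ζ‖ ^ (2 * N) / (∏ p ∈ Finset.range N, μ p) ^ 2 ≤
      ‖∏' p : ℕ, (1 + ζ ^ 2 / (μ p : ℂ) ^ 2)‖ :=
  abs_canonical_product_lower_bound_general μ hμsum ζ hζ N
end

section
/- Let L > 0 and define P_L(ζ) := ∏_{p=1}^∞ (1 + L²ζ²/m_p²) for ζ ∈ ℂ. Then there exist constants C > 0 and L₁ > 0 such that |P_L(ζ)| ≤ C · exp(M(L₁|ζ|)) for all ζ ∈ ℂ. -/
/-!
Put `ρ = L‖ζ‖`. Each factor of the product has norm at most `(1 + ρ / m_p)²`, so it suffices to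
bound the partial products of `1 + ρ / m_p`. Split them at the first index `N` with `ρ < m_N`.
The first `N` factors are at most `2ρ / m_p`, with product `(2ρ)^N / M_N ≤ exp M(2ρ)`; as this
quotient is also at least `2^N`, we get `N log 2 ≤ M(2ρ)`. The other factors contribute at most
`exp (m_N ∑_{p ≥ N} 1 / m_p)`, which (M.3) bounds by `exp (A' N + C₀)`, `C₀ = m_0 ∑ 1 / m_p`.
Hence `‖P_L(ζ)‖ ≤ exp (2c M(2ρ) + 2C₀)` with `c = 1 + A' / log 2`. Finally (M.2) gives
`2 M(σ) ≤ log A + M(Hσ)`; iterating it `k` times with `2^k ≥ 2c` absorbs the factor `2c` into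
the argument, `M(2 H^k ρ)`.
-/

/-- The associated function of a sequence `(M_p)`: `M(ρ) := sup_{p ∈ ℕ} log(ρ^p / M_p)`. -/
noncomputable def assocFn (M : ℕ → ℝ) (ρ : ℝ) : ℝ :=
  ⨆ p : ℕ, Real.log (ρ ^ p / M p)

open Filter Finset Real

theorem norm_tprod_le_of_forall_norm_prod_le {ι R : Type*} [SeminormedCommRing R] [NormOneClass R]
    {f : ι → R} {B : ℝ} (hB : 1 ≤ B) (h : ∀ s : Finset ι, ‖∏ i ∈ s, f i‖ ≤ B) :
    ‖∏' i, f i‖ ≤ B := by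
  -- `1 ≤ B` covers the junk value `∏' i, f i = 1` of a non-multipliable product.
  by_cases hf : Multipliable f
  · exact le_of_tendsto' (Tendsto.norm hf.hasProd) h
  · rwa [tprod_eq_one_of_not_multipliable hf, NormOneClass.norm_one]

theorem norm_one_add_sq_le {R : Type*} [SeminormedRing R] [NormOneClass R] (x : R) :
    ‖1 + x ^ 2‖ ≤ (1 + ‖x‖) ^ 2 := by
  have := norm_pow_le x 2
  nlinarith [norm_add_le 1 (x ^ 2), norm_one (α := R), norm_nonneg x]

theorem norm_tprod_one_add_sq_le {R : Type*} [NormedCommRing R] [NormOneClass R] {x : ℕ → R}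
    {B : ℝ} (h : ∀ n, ∏ p ∈ range n, (1 + ‖x p‖) ≤ B) :
    ‖∏' p, (1 + x p ^ 2)‖ ≤ B ^ 2 := by
  have hB : 1 ≤ B := by simpa using h 0
  refine norm_tprod_le_of_forall_norm_prod_le (by nlinarith) fun s => ?_
  obtain ⟨n, hsn⟩ : ∃ n, s ⊆ range n := s.exists_nat_subset_range
  have hone : ∀ p, 1 ≤ 1 + ‖x p‖ := fun p => le_add_of_nonneg_right (norm_nonneg _)
  calc ‖∏ p ∈ s, (1 + x p ^ 2)‖ ≤ ∏ p ∈ s, ‖1 + x p ^ 2‖ := norm_prod_le s _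
    _ ≤ ∏ p ∈ s, (1 + ‖x p‖) ^ 2 :=
        Finset.prod_le_prod (fun _ _ => norm_nonneg _) fun p _ => norm_one_add_sq_le (x p)
    _ = (∏ p ∈ s, (1 + ‖x p‖)) ^ 2 := prod_pow s 2 _
    _ ≤ (∏ p ∈ range n, (1 + ‖x p‖)) ^ 2 := by
        gcongr
        exact fun p _ _ => hone p
    _ ≤ B ^ 2 := by gcongr; exact h n

theorem assocFn_le_of_forall_pow_div_le_exp {M : ℕ → ℝ} (hMpos : ∀ p, 0 < M p) (hM0 : M 0 = 1)
    {σ B : ℝ} (hσ : 0 ≤ σ) (h : ∀ p, σ ^ p / M p ≤ exp B) : assocFn M σ ≤ B := by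
  have hB : 0 ≤ B := by simpa [hM0] using h 0
  refine ciSup_le fun p => ?_
  rcases (div_nonneg (pow_nonneg hσ p) (hMpos p).le).eq_or_lt with h0 | hpos
  · rw [← h0, log_zero]
    exact hB
  · exact (log_le_iff_le_exp hpos).2 (h p)

section
variable {M m : ℕ → ℝ} (hMpos : ∀ p, 0 < M p) (hm : ∀ p, m p = M (p + 1) / M p)
include hMpos hm

theorem ratio_pos (p : ℕ) : 0 < m p :=
  hm p ▸ div_pos (hMpos _) (hMpos p)

theorem eq_prod_range_ratio (hM0 : M 0 = 1) (n : ℕ) : M n = ∏ p ∈ range n, m p := by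
  induction n with
  | zero => simp [hM0]
  | succ n ih => rw [prod_range_succ, ← ih, hm, mul_div_cancel₀ _ (hMpos n).ne']

theorem bddAbove_range_log_pow_div (hmtop : Tendsto m atTop atTop) {σ : ℝ} (hσ : 0 ≤ σ) :
    BddAbove (Set.range fun p => log (σ ^ p / M p)) := by
  have hnonneg : ∀ p, 0 ≤ σ ^ p / M p := fun p => div_nonneg (pow_nonneg hσ p) (hMpos p).le
  have hsum : Summable fun p => σ ^ p / M p := by
    refine summable_of_ratio_norm_eventually_le (r := 1 / 2) (by norm_num) ?_
    filter_upwards [hmtop.eventually_ge_atTop (2 * σ)] with p hp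
    have hmp := ratio_pos hMpos hm p
    have hstep : σ ^ (p + 1) / M (p + 1) = σ / m p * (σ ^ p / M p) := by
      rw [hm]
      field_simp [(hMpos p).ne', (hMpos (p + 1)).ne']
      ring
    rw [norm_of_nonneg (hnonneg _), norm_of_nonneg (hnonneg _), hstep]
    refine mul_le_mul_of_nonneg_right ?_ (hnonneg p)
    rw [div_le_iff₀ hmp]
    linarith
  obtain ⟨b, hb⟩ := hsum.tendsto_atTop_zero.bddAbove_range
  exact ⟨b, by rintro _ ⟨p, rfl⟩; exact (log_le_self (hnonneg p)).trans (hb ⟨p, rfl⟩)⟩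

theorem log_pow_div_le_assocFn (hmtop : Tendsto m atTop atTop) {σ : ℝ} (hσ : 0 ≤ σ) (p : ℕ) :
    log (σ ^ p / M p) ≤ assocFn M σ :=
  le_ciSup (bddAbove_range_log_pow_div hMpos hm hmtop hσ) p

theorem pow_div_le_exp_assocFn (hmtop : Tendsto m atTop atTop) {σ : ℝ} (hσ : 0 ≤ σ) (p : ℕ) :
    σ ^ p / M p ≤ exp (assocFn M σ) :=
  (le_exp_log _).trans (exp_le_exp.2 (log_pow_div_le_assocFn hMpos hm hmtop hσ p))

theorem assocFn_nonneg (hM0 : M 0 = 1) (hmtop : Tendsto m atTop atTop) {σ : ℝ} (hσ : 0 ≤ σ) :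
    0 ≤ assocFn M σ := by
  simpa [hM0] using log_pow_div_le_assocFn hMpos hm hmtop hσ 0

theorem two_mul_assocFn_le (hM0 : M 0 = 1) (hmtop : Tendsto m atTop atTop) {A H : ℝ}
    (hA : 0 < A) (hH : 0 ≤ H) (hM2 : ∀ p q : ℕ, q ≤ p → M p ≤ A * H ^ p * M q * M (p - q))
    {σ : ℝ} (hσ : 0 ≤ σ) : 2 * assocFn M σ ≤ log A + assocFn M (H * σ) := by
  suffices assocFn M σ ≤ (log A + assocFn M (H * σ)) / 2 by linarith
  refine assocFn_le_of_forall_pow_div_le_exp hMpos hM0 hσ fun p => ?_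
  rw [exp_half, le_sqrt (div_nonneg (pow_nonneg hσ p) (hMpos p).le) (exp_nonneg _), exp_add,
    exp_log hA]
  have h2p := hM2 (2 * p) p (by omega)
  rw [show 2 * p - p = p by omega] at h2p
  calc (σ ^ p / M p) ^ 2 = σ ^ (2 * p) / (M p * M p) := by ring
    _ ≤ A * ((H * σ) ^ (2 * p) / M (2 * p)) := by
        rw [← mul_div_assoc, div_le_div_iff₀ (mul_pos (hMpos p) (hMpos p)) (hMpos (2 * p)), mul_pow]
        nlinarith [mul_le_mul_of_nonneg_left h2p (pow_nonneg hσ (2 * p))]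
    _ ≤ A * exp (assocFn M (H * σ)) := by
        gcongr
        exact pow_div_le_exp_assocFn hMpos hm hmtop (mul_nonneg hH hσ) _

theorem pow_two_mul_assocFn_le (hM0 : M 0 = 1) (hmtop : Tendsto m atTop atTop) {A H : ℝ}
    (hA : 0 < A) (hH : 0 ≤ H) (hM2 : ∀ p q : ℕ, q ≤ p → M p ≤ A * H ^ p * M q * M (p - q))
    (k : ℕ) {σ : ℝ} (hσ : 0 ≤ σ) :
    2 ^ k * assocFn M σ ≤ (2 ^ k - 1) * log A + assocFn M (H ^ k * σ) := by
  induction k with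
  | zero => simp
  | succ k ih =>
    have h := two_mul_assocFn_le hMpos hm hM0 hmtop hA hH hM2 (mul_nonneg (pow_nonneg hH k) hσ)
    rw [← mul_assoc, ← pow_succ'] at h
    rw [pow_succ]
    linarith

theorem prod_range_one_add_div_le_pow_div (hM0 : M 0 = 1) {ρ : ℝ} {N : ℕ}
    (hN : ∀ p < N, m p ≤ ρ) : ∏ p ∈ range N, (1 + ρ / m p) ≤ (2 * ρ) ^ N / M N := by
  have hρ : ∀ p < N, 1 ≤ ρ / m p := fun p hp => (one_le_div (ratio_pos hMpos hm p)).2 (hN p hp)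
  calc ∏ p ∈ range N, (1 + ρ / m p) ≤ ∏ p ∈ range N, (2 * ρ / m p) := by
        refine Finset.prod_le_prod (fun p hp => ?_) fun p hp => ?_
        · linarith [hρ p (mem_range.1 hp)]
        · rw [mul_div_assoc]
          linarith [hρ p (mem_range.1 hp)]
    _ = (2 * ρ) ^ N / M N := by
        rw [prod_div_distrib, prod_const, card_range, eq_prod_range_ratio hMpos hm hM0]

theorem two_pow_le_pow_div (hM0 : M 0 = 1) {ρ : ℝ} {N : ℕ} (hN : ∀ p < N, m p ≤ ρ) :
    2 ^ N ≤ (2 * ρ) ^ N / M N := by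
  have hMN : M N ≤ ρ ^ N := by
    calc M N = ∏ p ∈ range N, m p := eq_prod_range_ratio hMpos hm hM0 N
      _ ≤ ∏ p ∈ range N, ρ :=
          Finset.prod_le_prod (fun p _ => (ratio_pos hMpos hm p).le)
            fun p hp => hN p (mem_range.1 hp)
      _ = ρ ^ N := by rw [prod_const, card_range]
  rw [le_div_iff₀ (hMpos N), mul_pow]
  gcongr

theorem ratio_mul_tsum_inv_le {A' : ℝ}
    (hM3 : ∀ p : ℕ, 1 ≤ p → ∑' j : ℕ, M (p + j) / M (p + j + 1) ≤ A' * p * M p / M (p + 1))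
    (N : ℕ) : m N * ∑' j, 1 / m (N + j) ≤ A' * N + m 0 * ∑' j, 1 / m j := by
  rcases Nat.eq_zero_or_pos N with rfl | hN
  · simp
  have hC : 0 ≤ m 0 * ∑' j, 1 / m j :=
    mul_nonneg (ratio_pos hMpos hm 0).le
      (tsum_nonneg fun j => (one_div_pos.2 (ratio_pos hMpos hm j)).le)
  have hinv : ∑' j, 1 / m (N + j) = ∑' j, M (N + j) / M (N + j + 1) :=
    tsum_congr fun j => by rw [hm, one_div_div]
  calc m N * ∑' j, 1 / m (N + j) ≤ m N * (A' * N * M N / M (N + 1)) := by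
        rw [hinv]
        exact mul_le_mul_of_nonneg_left (hM3 N hN) (ratio_pos hMpos hm N).le
    _ = A' * N := by
        rw [hm]
        field_simp [(hMpos N).ne', (hMpos (N + 1)).ne']
    _ ≤ A' * N + m 0 * ∑' j, 1 / m j := le_add_of_nonneg_right hC

theorem natCast_mul_log_two_le_assocFn (hM0 : M 0 = 1) (hmtop : Tendsto m atTop atTop) {ρ : ℝ}
    (hρ : 0 ≤ ρ) {N : ℕ} (hN : ∀ p < N, m p ≤ ρ) : N * log 2 ≤ assocFn M (2 * ρ) := by
  rw [← log_pow]
  exact (log_le_log (by positivity) (two_pow_le_pow_div hMpos hm hM0 hN)).trans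
    (log_pow_div_le_assocFn hMpos hm hmtop (by positivity) N)

theorem prod_range_one_add_div_shift_le (hmsum : Summable fun p => 1 / m p) {A' : ℝ}
    (hM3 : ∀ p : ℕ, 1 ≤ p → ∑' j : ℕ, M (p + j) / M (p + j + 1) ≤ A' * p * M p / M (p + 1))
    {ρ : ℝ} (hρ : 0 ≤ ρ) {N : ℕ} (hN : ρ ≤ m N) (n : ℕ) :
    ∏ j ∈ range n, (1 + ρ / m (N + j)) ≤ exp (A' * N + m 0 * ∑' j, 1 / m j) := by
  have hsum : Summable fun j => 1 / m (N + j) := by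
    simpa only [add_comm N] using (summable_nat_add_iff N).2 hmsum
  have hinv : ∀ j, 0 ≤ 1 / m (N + j) := fun j => (one_div_pos.2 (ratio_pos hMpos hm _)).le
  calc ∏ j ∈ range n, (1 + ρ / m (N + j)) ≤ exp (∑ j ∈ range n, ρ * (1 / m (N + j))) := by
        simp_rw [mul_one_div]
        exact prod_one_add_le_exp_sum _ fun j => div_nonneg hρ (ratio_pos hMpos hm _).le
    _ ≤ exp (m N * ∑' j, 1 / m (N + j)) := by
        rw [← mul_sum]
        exact exp_le_exp.2 (mul_le_mul hN (hsum.sum_le_tsum _ fun j _ => hinv j)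
          (sum_nonneg fun j _ => hinv j) (ratio_pos hMpos hm N).le)
    _ ≤ exp (A' * N + m 0 * ∑' j, 1 / m j) := exp_le_exp.2 (ratio_mul_tsum_inv_le hMpos hm hM3 N)

theorem prod_range_one_add_div_le (hM0 : M 0 = 1) (hmtop : Tendsto m atTop atTop)
    (hmsum : Summable fun p => 1 / m p) {A' : ℝ} (hA' : 0 ≤ A')
    (hM3 : ∀ p : ℕ, 1 ≤ p → ∑' j : ℕ, M (p + j) / M (p + j + 1) ≤ A' * p * M p / M (p + 1))
    {ρ : ℝ} (hρ : 0 ≤ ρ) (n : ℕ) :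
    ∏ p ∈ range n, (1 + ρ / m p) ≤
      exp ((1 + A' / log 2) * assocFn M (2 * ρ) + m 0 * ∑' p, 1 / m p) := by
  classical
  have hex : ∃ N, ρ < m N := (hmtop.eventually_gt_atTop ρ).exists
  set N := Nat.find hex
  have hlow : ∀ p < N, m p ≤ ρ := fun p hp => not_lt.1 (Nat.find_min hex hp)
  have hone : ∀ p, 1 ≤ 1 + ρ / m p :=
    fun p => le_add_of_nonneg_right (div_nonneg hρ (ratio_pos hMpos hm p).le)
  have hhead : ∏ p ∈ range N, (1 + ρ / m p) ≤ exp (assocFn M (2 * ρ)) :=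
    (prod_range_one_add_div_le_pow_div hMpos hm hM0 hlow).trans
      (pow_div_le_exp_assocFn hMpos hm hmtop (by positivity) N)
  have hN : A' * N ≤ A' / log 2 * assocFn M (2 * ρ) := by
    rw [div_mul_eq_mul_div, le_div_iff₀ (log_pos one_lt_two), mul_assoc]
    exact mul_le_mul_of_nonneg_left (natCast_mul_log_two_le_assocFn hMpos hm hM0 hmtop hρ hlow) hA'
  calc ∏ p ∈ range n, (1 + ρ / m p) ≤ ∏ p ∈ range (N + n), (1 + ρ / m p) :=
        prod_le_prod_of_subset_of_one_le (range_subset_range.2 (by omega))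
          (fun p _ => zero_le_one.trans (hone p)) fun p _ _ => hone p
    _ = (∏ p ∈ range N, (1 + ρ / m p)) * ∏ j ∈ range n, (1 + ρ / m (N + j)) := prod_range_add _ _ _
    _ ≤ exp (assocFn M (2 * ρ)) * exp (A' * N + m 0 * ∑' j, 1 / m j) :=
        mul_le_mul hhead
          (prod_range_one_add_div_shift_le hMpos hm hmsum hM3 hρ (Nat.find_spec hex).le n)
          (prod_nonneg fun p _ => zero_le_one.trans (hone _)) (exp_pos _).le
    _ ≤ _ := by
        rw [← exp_add]
        exact exp_le_exp.2 (by linarith)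

end

theorem canonical_product_upper_bound_Beurling_general
    (M : ℕ → ℝ) (hMpos : ∀ p, 0 < M p) (hM0 : M 0 = 1)
    (hM2 : ∃ A H : ℝ, 0 < A ∧ 0 < H ∧
      ∀ p q : ℕ, q ≤ p → M p ≤ A * H ^ p * M q * M (p - q))
    (hM3 : ∃ A' : ℝ, 0 < A' ∧ ∀ p : ℕ, 1 ≤ p →
      ∑' j : ℕ, M (p + j) / M (p + j + 1) ≤ A' * p * M p / M (p + 1))
    (m : ℕ → ℝ) (hm : ∀ p, m p = M (p + 1) / M p)
    (hmsum : Summable fun p => 1 / m p)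
    (hmtop : Filter.Tendsto m Filter.atTop Filter.atTop)
    (L : ℝ) (hL : 0 < L) :
    ∃ C L₁ : ℝ, 0 < C ∧ 0 < L₁ ∧ ∀ ζ : ℂ,
      ‖∏' p : ℕ, (1 + (L : ℂ) ^ 2 * ζ ^ 2 / (m p : ℂ) ^ 2)‖ ≤
        C * Real.exp (assocFn M (L₁ * ‖ζ‖)) := by
  obtain ⟨A, H, hA, hH, hM2⟩ := hM2
  obtain ⟨A', hA', hM3⟩ := hM3
  set c := 1 + A' / log 2
  set C₀ := m 0 * ∑' p, 1 / m p
  obtain ⟨k, hk⟩ := pow_unbounded_of_one_lt (2 * c) one_lt_two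
  refine ⟨exp (2 * C₀ + (2 ^ k - 1) * log A), 2 * L * H ^ k, exp_pos _, by positivity,
    fun ζ => ?_⟩
  set ρ := L * ‖ζ‖
  have hρ : 0 ≤ ρ := by positivity
  have hρ2 : 0 ≤ 2 * ρ := by positivity
  have hfactor : ∀ p, 1 + (L : ℂ) ^ 2 * ζ ^ 2 / (m p : ℂ) ^ 2 = 1 + ((L : ℂ) * ζ / m p) ^ 2 :=
    fun p => by ring
  have hnorm : ∀ p, ‖(L : ℂ) * ζ / m p‖ = ρ / m p := fun p => by
    simp [ρ, abs_of_pos hL, abs_of_pos (ratio_pos hMpos hm p)]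
  have hiter := pow_two_mul_assocFn_le hMpos hm hM0 hmtop hA hH.le hM2 k (σ := 2 * ρ) hρ2
  rw [show H ^ k * (2 * ρ) = 2 * L * H ^ k * ‖ζ‖ by ring] at hiter
  have hc := mul_le_mul_of_nonneg_right hk.le (assocFn_nonneg hMpos hm hM0 hmtop hρ2)
  calc ‖∏' p, (1 + (L : ℂ) ^ 2 * ζ ^ 2 / (m p : ℂ) ^ 2)‖
      = ‖∏' p, (1 + ((L : ℂ) * ζ / m p) ^ 2)‖ := by simp_rw [hfactor]
    _ ≤ exp (c * assocFn M (2 * ρ) + C₀) ^ 2 := norm_tprod_one_add_sq_le fun n => by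
        simpa only [hnorm] using prod_range_one_add_div_le hMpos hm hM0 hmtop hmsum hA'.le hM3 hρ n
    _ ≤ exp (2 * C₀ + (2 ^ k - 1) * log A) * exp (assocFn M (2 * L * H ^ k * ‖ζ‖)) := by
        rw [← exp_nat_mul, ← exp_add]
        exact exp_le_exp.2 (by push_cast; linarith)

/-- Let `(M_p)_{p≥0}` be a sequence of positive reals with `M_0 = 1` satisfying Komatsu's
conditions (M.1), (M.2), (M.3).  Put `m_p := M_p/M_{p-1}` (here `m p` denotes `m_{p+1}`,
so that `(m_p)` is nondecreasing, `∑ 1/m_p < ∞` and `m_p → ∞`).  Let `L > 0` and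
`P_L(ζ) := ∏_{p=1}^∞ (1 + L²ζ²/m_p²)`.  Then there exist `C > 0` and `L₁ > 0` with
`|P_L(ζ)| ≤ C · exp(M(L₁|ζ|))` for all `ζ ∈ ℂ`. -/
theorem canonical_product_upper_bound_Beurling
    (M : ℕ → ℝ) (hMpos : ∀ p, 0 < M p) (hM0 : M 0 = 1)
    (hM1 : ∀ p : ℕ, (M (p + 1)) ^ 2 ≤ M p * M (p + 2))
    (hM2 : ∃ A H : ℝ, 0 < A ∧ 0 < H ∧
      ∀ p q : ℕ, q ≤ p → M p ≤ A * H ^ p * M q * M (p - q))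
    (hM3 : ∃ A' : ℝ, 0 < A' ∧ ∀ p : ℕ, 1 ≤ p →
      ∑' j : ℕ, M (p + j) / M (p + j + 1) ≤ A' * p * M p / M (p + 1))
    (m : ℕ → ℝ) (hm : ∀ p, m p = M (p + 1) / M p)
    (hmmono : Monotone m) (hmsum : Summable fun p => 1 / m p)
    (hmtop : Filter.Tendsto m Filter.atTop Filter.atTop)
    (L : ℝ) (hL : 0 < L) :
    ∃ C L₁ : ℝ, 0 < C ∧ 0 < L₁ ∧ ∀ ζ : ℂ,
      ‖∏' p : ℕ, (1 + (L : ℂ) ^ 2 * ζ ^ 2 / (m p : ℂ) ^ 2)‖ ≤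
        C * Real.exp (assocFn M (L₁ * ‖ζ‖)) :=
  canonical_product_upper_bound_Beurling_general M hMpos hM0 hM2 hM3 m hm hmsum hmtop L hL
end

section
/- Let (L_p)_{p≥1} be a strictly decreasing sequence of positive real numbers with L_p → 0, and define P(ζ) := ∏_{p=1}^∞ (1 + L_p²ζ²/m_p²) for ζ ∈ ℂ. Then for every k > 0 there exists a constant C_k > 0 such that |P(ζ)| ≤ C_k · exp(M(k|ζ|)) for all ζ ∈ ℂ. -/
open Real Filter Finset Topology

theorem norm_one_add_sq_le_exp {R : Type*} [NormedRing R] [NormOneClass R] (w : R) :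
    ‖1 + w ^ 2‖ ≤ exp (2 * log (1 + ‖w‖)) := by
  rw [mul_comm, exp_mul, exp_log (by positivity), rpow_two]
  calc ‖1 + w ^ 2‖ ≤ ‖(1 : R)‖ + ‖w ^ 2‖ := norm_add_le _ _
    _ ≤ 1 + ‖w‖ ^ 2 := by rw [norm_one]; gcongr; exact norm_pow_le w 2
    _ ≤ (1 + ‖w‖) ^ 2 := by nlinarith [norm_nonneg w]

theorem norm_tprod_le_exp_tsum {ι R : Type*} [NormedCommRing R] [NormOneClass R]
    {f : ι → R} {g : ι → ℝ} (hfg : ∀ i, ‖f i‖ ≤ exp (g i)) (hg0 : ∀ i, 0 ≤ g i)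
    (hg : Summable g) : ‖∏' i, f i‖ ≤ exp (∑' i, g i) := by
  by_cases hf : Multipliable f
  · refine le_of_tendsto ((continuous_norm.tendsto _).comp hf.hasProd)
      (Eventually.of_forall fun s => ?_)
    calc ‖∏ i ∈ s, f i‖ ≤ ∏ i ∈ s, ‖f i‖ := Finset.norm_prod_le s f
      _ ≤ ∏ i ∈ s, exp (g i) := prod_le_prod (fun i _ => norm_nonneg _) fun i _ => hfg i
      _ = exp (∑ i ∈ s, g i) := (exp_sum s g).symm
      _ ≤ exp (∑' i, g i) := exp_le_exp.2 (hg.sum_le_tsum s fun i _ => hg0 i)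
  · rw [tprod_eq_one_of_not_multipliable hf, norm_one]
    exact one_le_exp (tsum_nonneg hg0)

theorem norm_one_add_ofReal_sq_mul_div_le {a b : ℝ} (hb : 0 < b) (ζ : ℂ) :
    ‖1 + (a : ℂ) ^ 2 * ζ ^ 2 / (b : ℂ) ^ 2‖ ≤ exp (2 * log (1 + |a| * ‖ζ‖ / b)) := by
  have hnorm : ‖(a : ℂ) * ζ / b‖ = |a| * ‖ζ‖ / b := by
    rw [norm_div, norm_mul, Complex.norm_real, Complex.norm_real, Real.norm_eq_abs,
      Real.norm_eq_abs, abs_of_pos hb]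
  rw [← hnorm, show (a : ℂ) ^ 2 * ζ ^ 2 / (b : ℂ) ^ 2 = ((a : ℂ) * ζ / b) ^ 2 by ring]
  exact norm_one_add_sq_le_exp _

theorem Real.log_one_add_mul_le {a b : ℝ} (ha : 0 ≤ a) (hb : 0 ≤ b) :
    log (1 + a * b) ≤ log (1 + a) + log (1 + b) := by
  rw [← log_mul (by positivity) (by positivity)]
  exact log_le_log (by positivity) (by nlinarith)

theorem tsum_le_sum_range_add_tsum {u v c : ℕ → ℝ} {N : ℕ} (hu : Summable u) (hv : Summable v)
    (hle : ∀ p, u p ≤ c p + v p) (htail : ∀ p, N ≤ p → u p ≤ v p) :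
    ∑' p, u p ≤ ∑ p ∈ range N, c p + ∑' p, v p := by
  rw [← hu.sum_add_tsum_nat_add N, ← hv.sum_add_tsum_nat_add N, ← add_assoc, ← sum_add_distrib]
  gcongr ?_ + ?_
  · exact sum_le_sum fun p _ => hle p
  · exact ((summable_nat_add_iff N).2 hu).tsum_le_tsum (fun p => htail _ (Nat.le_add_left N p))
      ((summable_nat_add_iff N).2 hv)

theorem summable_log_one_add_div {m : ℕ → ℝ} (hmsum : Summable fun p => 1 / m p) (ρ : ℝ) :
    Summable fun p => log (1 + ρ / m p) := by
  simpa only [mul_one_div] using Real.summable_log_one_add_of_summable (hmsum.mul_left ρ)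

theorem exists_tsum_log_one_add_le_of_tendsto_zero {l m : ℕ → ℝ} (hl : Tendsto l atTop (𝓝 0))
    (hmpos : ∀ p, 0 < m p) (hmsum : Summable fun p => 1 / m p) {ε : ℝ} (hε : 0 < ε) :
    ∃ C, ∀ r, 0 ≤ r → Summable (fun p => log (1 + |l p| * r / m p)) ∧
      ∑' p, log (1 + |l p| * r / m p) ≤ C + ∑' p, log (1 + ε * r / m p) := by
  obtain ⟨N, hN⟩ := eventually_atTop.1 (hl.abs.eventually (ge_mem_nhds (by simpa using hε)))
  refine ⟨∑ p ∈ range N, log (1 + |l p| / ε), fun r hr => ?_⟩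
  have htail : ∀ p, N ≤ p → log (1 + |l p| * r / m p) ≤ log (1 + ε * r / m p) := fun p hp => by
    have := hmpos p
    gcongr
    exact hN p hp
  have hv := summable_log_one_add_div hmsum (ε * r)
  have hu : Summable fun p => log (1 + |l p| * r / m p) := by
    refine hv.of_norm_bounded_eventually_nat ?_
    filter_upwards [eventually_ge_atTop N] with p hp
    have := hmpos p
    rw [norm_of_nonneg (log_nonneg (le_add_of_nonneg_right (by positivity)))]
    exact htail p hp
  refine ⟨hu, tsum_le_sum_range_add_tsum hu hv (fun p => ?_) htail⟩
  have := hmpos p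
  calc log (1 + |l p| * r / m p) = log (1 + |l p| / ε * (ε * r / m p)) := by
        field_simp
    _ ≤ _ := log_one_add_mul_le (by positivity) (by positivity)

theorem assocFn_zero {M : ℕ → ℝ} (hM0 : M 0 = 1) : assocFn M 0 = 0 := by
  have : (fun p : ℕ => log ((0 : ℝ) ^ p / M p)) = fun _ => 0 := by
    funext p
    rcases p with _ | p <;> simp [hM0]
  rw [assocFn, this, ciSup_const]

theorem mul_tsum_inv_tail_le {m : ℕ → ℝ} {A' ρ : ℝ} (hmpos : ∀ p, 0 < m p) (hA' : 0 ≤ A')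
    (hM3 : ∀ p, 1 ≤ p → ∑' j, 1 / m (p + j) ≤ A' * p / m p) (hρ : 0 ≤ ρ) {n : ℕ}
    (hn : ρ < m n) : ρ * ∑' j, 1 / m (j + n) ≤ A' * n + m 0 * ∑' p, 1 / m p := by
  have hS : 0 ≤ ∑' p, 1 / m p := tsum_nonneg fun p => (one_div_pos.2 (hmpos p)).le
  rcases Nat.eq_zero_or_pos n with rfl | hn1
  · simp only [add_zero, Nat.cast_zero, mul_zero, zero_add]
    gcongr
  · calc ρ * ∑' j, 1 / m (j + n) ≤ ρ * (A' * n / m n) := by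
          gcongr
          simpa only [add_comm] using hM3 n hn1
      _ ≤ A' * n := by
        rw [mul_div_left_comm]
        exact mul_le_of_le_one_right (by positivity) ((div_le_one (hmpos n)).2 hn.le)
      _ ≤ A' * n + m 0 * ∑' p, 1 / m p := le_add_of_nonneg_right (by have := hmpos 0; positivity)

structure IsWeightSequence (M m : ℕ → ℝ) : Prop where
  pos : ∀ p, 0 < M p
  map_zero : M 0 = 1
  quotient : ∀ p, m p = M (p + 1) / M p
  monotone : Monotone m
  tendsto : Tendsto m atTop atTop

namespace IsWeightSequence

variable {M m : ℕ → ℝ} {ρ : ℝ}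

theorem m_pos (hw : IsWeightSequence M m) (p : ℕ) : 0 < m p := by
  rw [hw.quotient]
  exact div_pos (hw.pos _) (hw.pos _)

theorem pow_div_eq_prod (hw : IsWeightSequence M m) (ρ : ℝ) (p : ℕ) :
    ρ ^ p / M p = ∏ q ∈ range p, ρ / m q := by
  induction p with
  | zero => simp [hw.map_zero]
  | succ p ih =>
    have := hw.pos p
    have := hw.pos (p + 1)
    rw [prod_range_succ, ← ih, hw.quotient]
    field_simp
    ring

theorem exists_central_index (hw : IsWeightSequence M m) (ρ : ℝ) :
    ∃ n, (∀ q < n, m q ≤ ρ) ∧ ∀ q, n ≤ q → ρ < m q := by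
  classical
  have hex : ∃ n, ρ < m n := (hw.tendsto.eventually_gt_atTop ρ).exists
  exact ⟨Nat.find hex, fun q hq => not_lt.1 (Nat.find_min hex hq),
    fun q hq => (Nat.find_spec hex).trans_le (hw.monotone hq)⟩

theorem pow_div_le_of_central_index (hw : IsWeightSequence M m) (hρ : 0 ≤ ρ) {n : ℕ}
    (hlow : ∀ q < n, m q ≤ ρ) (hhigh : ∀ q, n ≤ q → ρ < m q) (p : ℕ) :
    ρ ^ p / M p ≤ ρ ^ n / M n := by
  have hnonneg : ∀ s : Finset ℕ, 0 ≤ ∏ q ∈ s, ρ / m q := fun s =>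
    prod_nonneg fun q _ => div_nonneg hρ (hw.m_pos q).le
  simp only [hw.pow_div_eq_prod]
  rcases le_total p n with hpn | hnp
  · rw [← prod_range_mul_prod_Ico _ hpn]
    refine le_mul_of_one_le_right (hnonneg _) (one_le_prod fun q hq => ?_)
    exact (one_le_div (hw.m_pos q)).2 (hlow q (mem_Ico.1 hq).2)
  · rw [← prod_range_mul_prod_Ico _ hnp]
    refine mul_le_of_le_one_right (hnonneg _) (prod_le_one (fun q _ => ?_) fun q hq => ?_)
    · exact div_nonneg hρ (hw.m_pos q).le
    · exact (div_le_one (hw.m_pos q)).2 (hhigh q (mem_Ico.1 hq).1).le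

theorem bddAbove_log_pow_div (hw : IsWeightSequence M m) (hρ : 0 ≤ ρ) :
    BddAbove (Set.range fun p => log (ρ ^ p / M p)) := by
  obtain ⟨n, hlow, hhigh⟩ := hw.exists_central_index ρ
  refine ⟨ρ ^ n / M n, ?_⟩
  rintro _ ⟨p, rfl⟩
  have := hw.pos p
  exact (log_le_self (by positivity)).trans (hw.pow_div_le_of_central_index hρ hlow hhigh p)

theorem log_pow_div_le_assocFn (hw : IsWeightSequence M m) (hρ : 0 ≤ ρ) (p : ℕ) :
    log (ρ ^ p / M p) ≤ assocFn M ρ :=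
  le_ciSup (hw.bddAbove_log_pow_div hρ) p

theorem assocFn_nonneg (hw : IsWeightSequence M m) (hρ : 0 ≤ ρ) : 0 ≤ assocFn M ρ := by
  simpa [hw.map_zero] using hw.log_pow_div_le_assocFn hρ 0

theorem two_mul_assocFn_le (hw : IsWeightSequence M m) {A H : ℝ} (hH : 0 < H)
    (hM2 : ∀ p q, q ≤ p → M p ≤ A * H ^ p * M q * M (p - q)) (hρ : 0 ≤ ρ) :
    2 * assocFn M ρ ≤ log A + assocFn M (H * ρ) := by
  have hA : 1 ≤ A := by simpa [hw.map_zero] using hM2 0 0 le_rfl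
  rcases hρ.eq_or_lt with rfl | hρ
  · simp [assocFn_zero hw.map_zero, log_nonneg hA]
  have hpair : ∀ p q, log (ρ ^ p / M p) + log (ρ ^ q / M q) ≤ log A + assocFn M (H * ρ) := by
    intro p q
    have := hw.pos p
    have := hw.pos q
    have := hw.pos (p + q)
    have hprod : ρ ^ p / M p * (ρ ^ q / M q) ≤ A * ((H * ρ) ^ (p + q) / M (p + q)) := by
      have h := hM2 (p + q) q (Nat.le_add_left q p)
      rw [Nat.add_sub_cancel] at h
      rw [div_mul_div_comm, ← pow_add, mul_pow, div_le_iff₀ (by positivity)]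
      calc ρ ^ (p + q) = ρ ^ (p + q) * M (p + q) / M (p + q) := by field_simp
        _ ≤ ρ ^ (p + q) * (A * H ^ (p + q) * M q * M p) / M (p + q) := by gcongr
        _ = _ := by ring
    calc log (ρ ^ p / M p) + log (ρ ^ q / M q) = log (ρ ^ p / M p * (ρ ^ q / M q)) :=
          (log_mul (by positivity) (by positivity)).symm
      _ ≤ log (A * ((H * ρ) ^ (p + q) / M (p + q))) := log_le_log (by positivity) hprod
      _ = log A + log ((H * ρ) ^ (p + q) / M (p + q)) :=
          log_mul (by positivity) (by positivity)
      _ ≤ log A + assocFn M (H * ρ) := by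
          gcongr
          exact hw.log_pow_div_le_assocFn (by positivity) _
  have : assocFn M ρ ≤ log A + assocFn M (H * ρ) - assocFn M ρ :=
    ciSup_le fun p => le_sub_comm.1 (ciSup_le fun q => by linarith [hpair p q])
  linarith

theorem pow_mul_assocFn_le (hw : IsWeightSequence M m) {A H : ℝ} (hH : 0 < H)
    (hM2 : ∀ p q, q ≤ p → M p ≤ A * H ^ p * M q * M (p - q)) (n : ℕ) (hρ : 0 ≤ ρ) :
    2 ^ n * assocFn M ρ ≤ (2 ^ n - 1) * log A + assocFn M (H ^ n * ρ) := by
  induction n generalizing ρ with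
  | zero => simp
  | succ n ih =>
    have h2 := hw.two_mul_assocFn_le hH hM2 hρ
    have hn := ih (mul_nonneg hH.le hρ)
    rw [← mul_assoc, ← pow_succ] at hn
    calc 2 ^ (n + 1) * assocFn M ρ = 2 ^ n * (2 * assocFn M ρ) := by ring
      _ ≤ 2 ^ n * (log A + assocFn M (H * ρ)) := by gcongr
      _ ≤ (2 ^ (n + 1) - 1) * log A + assocFn M (H ^ (n + 1) * ρ) := by
          rw [pow_succ]; linarith

theorem tsum_log_one_add_div_le (hw : IsWeightSequence M m) (hmsum : Summable fun p => 1 / m p)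
    {A' : ℝ} (hA' : 0 ≤ A') (hM3 : ∀ p, 1 ≤ p → ∑' j, 1 / m (p + j) ≤ A' * p / m p)
    (hρ : 0 ≤ ρ) :
    ∑' p, log (1 + ρ / m p) ≤
      (1 + A' / log 2) * assocFn M (2 * ρ) + m 0 * ∑' p, 1 / m p := by
  obtain ⟨n, hlow, hhigh⟩ := hw.exists_central_index ρ
  have hm := hw.m_pos
  have htwo : ∀ q ∈ range n, 2 ≤ 2 * ρ / m q := fun q hq => by
    rw [le_div_iff₀ (hm q)]
    linarith [hlow q (mem_range.1 hq)]
  have hcentral : ∑ q ∈ range n, log (2 * ρ / m q) ≤ assocFn M (2 * ρ) := by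
    rw [← log_prod fun q hq => (zero_lt_two.trans_le (htwo q hq)).ne', ← hw.pow_div_eq_prod]
    exact hw.log_pow_div_le_assocFn (by positivity) n
  have hhead : ∑ q ∈ range n, log (1 + ρ / m q) ≤ assocFn M (2 * ρ) := by
    refine (sum_le_sum fun q hq => log_le_log (by have := hm q; positivity) ?_).trans hcentral
    linarith [htwo q hq, mul_div_assoc 2 ρ (m q)]
  have hcount : n * log 2 ≤ assocFn M (2 * ρ) := by
    refine le_trans ?_ hcentral
    simpa using sum_le_sum fun q hq => log_le_log two_pos (htwo q hq)
  have hshift : ∀ {f : ℕ → ℝ}, Summable f → Summable fun j => f (j + n) :=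
    (summable_nat_add_iff n).2
  have htail : ∑' j, log (1 + ρ / m (j + n)) ≤ A' * n + m 0 * ∑' p, 1 / m p := by
    refine le_trans ?_ (mul_tsum_inv_tail_le hm hA' hM3 hρ (hhigh n le_rfl))
    rw [← tsum_mul_left]
    refine (hshift (summable_log_one_add_div hmsum ρ)).tsum_le_tsum (fun j => ?_)
      (hshift (hmsum.mul_left ρ))
    have := hm (j + n)
    rw [mul_one_div]
    linarith [log_le_sub_one_of_pos (by positivity : 0 < 1 + ρ / m (j + n))]
  have hA'n : A' * n ≤ A' / log 2 * assocFn M (2 * ρ) := by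
    have hlog2 := log_pos one_lt_two
    calc A' * n = A' / log 2 * (n * log 2) := by field_simp
      _ ≤ A' / log 2 * assocFn M (2 * ρ) := by gcongr
  rw [← (summable_log_one_add_div hmsum ρ).sum_add_tsum_nat_add n]
  linarith

theorem exists_mul_tsum_log_one_add_div_le (hw : IsWeightSequence M m)
    (hmsum : Summable fun p => 1 / m p) {A H A' : ℝ} (hH : 0 < H)
    (hM2 : ∀ p q, q ≤ p → M p ≤ A * H ^ p * M q * M (p - q)) (hA' : 0 ≤ A')
    (hM3 : ∀ p, 1 ≤ p → ∑' j, 1 / m (p + j) ≤ A' * p / m p) {k : ℝ} (hk : 0 < k)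
    {c : ℝ} (hc : 0 ≤ c) :
    ∃ ε > 0, ∃ B, ∀ ρ, 0 ≤ ρ → c * ∑' p, log (1 + ε * ρ / m p) ≤ B + assocFn M (k * ρ) := by
  set K := 1 + A' / log 2
  obtain ⟨j, hj⟩ := pow_unbounded_of_one_lt (c * K) one_lt_two
  refine ⟨k / (2 * H ^ j), by positivity,
    c * (m 0 * ∑' p, 1 / m p) + (2 ^ j - 1) * log A, fun ρ hρ => ?_⟩
  have hερ : 0 ≤ 2 * (k / (2 * H ^ j) * ρ) := by positivity
  have hkρ : H ^ j * (2 * (k / (2 * H ^ j) * ρ)) = k * ρ := by field_simp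
  have hsum := hw.tsum_log_one_add_div_le hmsum hA' hM3 (by positivity : 0 ≤ k / (2 * H ^ j) * ρ)
  have hdouble := hw.pow_mul_assocFn_le hH hM2 j hερ
  rw [hkρ] at hdouble
  have hK : c * K * assocFn M (2 * (k / (2 * H ^ j) * ρ)) ≤
      2 ^ j * assocFn M (2 * (k / (2 * H ^ j) * ρ)) := by
    gcongr
    exact hw.assocFn_nonneg hερ
  calc c * ∑' p, log (1 + k / (2 * H ^ j) * ρ / m p)
      ≤ c * (K * assocFn M (2 * (k / (2 * H ^ j) * ρ)) + m 0 * ∑' p, 1 / m p) := by gcongr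
    _ ≤ _ := by linarith

end IsWeightSequence

theorem canonical_product_upper_bound_Roumieu_general
    (M : ℕ → ℝ) (hMpos : ∀ p, 0 < M p) (hM0 : M 0 = 1)
    (hM2 : ∃ A H : ℝ, 0 < A ∧ 0 < H ∧
      ∀ p q : ℕ, q ≤ p → M p ≤ A * H ^ p * M q * M (p - q))
    (hM3 : ∃ A' : ℝ, 0 < A' ∧ ∀ p : ℕ, 1 ≤ p →
      ∑' j : ℕ, M (p + j) / M (p + j + 1) ≤ A' * p * M p / M (p + 1))
    (m : ℕ → ℝ) (hm : ∀ p, m p = M (p + 1) / M p)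
    (hmmono : Monotone m) (hmsum : Summable fun p => 1 / m p)
    (hmtop : Filter.Tendsto m Filter.atTop Filter.atTop)
    (l : ℕ → ℝ)
    (hl0 : Filter.Tendsto l Filter.atTop (nhds 0)) :
    ∀ k : ℝ, 0 < k → ∃ Ck : ℝ, 0 < Ck ∧ ∀ ζ : ℂ,
      ‖∏' p : ℕ, (1 + (l p : ℂ) ^ 2 * ζ ^ 2 / (m p : ℂ) ^ 2)‖ ≤
        Ck * Real.exp (assocFn M (k * ‖ζ‖)) := by
  intro k hk
  obtain ⟨A, H, -, hH, hM2⟩ := hM2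
  obtain ⟨A', hA', hM3⟩ := hM3
  have hw : IsWeightSequence M m := ⟨hMpos, hM0, hm, hmmono, hmtop⟩
  have hM3' : ∀ p, 1 ≤ p → ∑' j, 1 / m (p + j) ≤ A' * p / m p := fun p hp => by
    simpa only [hm, one_div_div, add_right_comm p _ 1, div_div_eq_mul_div, one_mul]
      using hM3 p hp
  obtain ⟨ε, hε, B, hB⟩ :=
    hw.exists_mul_tsum_log_one_add_div_le hmsum hH hM2 hA'.le hM3' hk zero_le_two
  obtain ⟨C, hC⟩ := exists_tsum_log_one_add_le_of_tendsto_zero hl0 hw.m_pos hmsum hε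
  refine ⟨exp (2 * C + B), exp_pos _, fun ζ => ?_⟩
  obtain ⟨hsummable, hle⟩ := hC ‖ζ‖ (norm_nonneg ζ)
  calc ‖∏' p, (1 + (l p : ℂ) ^ 2 * ζ ^ 2 / (m p : ℂ) ^ 2)‖
      ≤ exp (∑' p, 2 * log (1 + |l p| * ‖ζ‖ / m p)) := by
        refine norm_tprod_le_exp_tsum (fun p => norm_one_add_ofReal_sq_mul_div_le (hw.m_pos p) ζ)
          (fun p => ?_) (hsummable.mul_left 2)
        have := hw.m_pos p
        exact mul_nonneg zero_le_two (log_nonneg (le_add_of_nonneg_right (by positivity)))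
    _ ≤ exp (2 * C + B + assocFn M (k * ‖ζ‖)) := by
        rw [tsum_mul_left]
        gcongr
        linarith [hB ‖ζ‖ (norm_nonneg ζ)]
    _ = exp (2 * C + B) * exp (assocFn M (k * ‖ζ‖)) := exp_add _ _

/-- Let `(M_p)_{p≥0}` be a sequence of positive reals with `M_0 = 1` satisfying Komatsu's
conditions (M.1), (M.2), (M.3), and `m_p := M_p/M_{p-1}` (here `m p` denotes `m_{p+1}`).
Let `(L_p)` be a strictly decreasing sequence of positive reals tending to `0` (here `l p`
denotes `L_{p+1}`), and `P(ζ) := ∏_{p=1}^∞ (1 + L_p²ζ²/m_p²)`.  Then for every `k > 0`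
there exists `C_k > 0` with `|P(ζ)| ≤ C_k · exp(M(k|ζ|))` for all `ζ ∈ ℂ`. -/
theorem canonical_product_upper_bound_Roumieu
    (M : ℕ → ℝ) (hMpos : ∀ p, 0 < M p) (hM0 : M 0 = 1)
    (hM1 : ∀ p : ℕ, (M (p + 1)) ^ 2 ≤ M p * M (p + 2))
    (hM2 : ∃ A H : ℝ, 0 < A ∧ 0 < H ∧
      ∀ p q : ℕ, q ≤ p → M p ≤ A * H ^ p * M q * M (p - q))
    (hM3 : ∃ A' : ℝ, 0 < A' ∧ ∀ p : ℕ, 1 ≤ p →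
      ∑' j : ℕ, M (p + j) / M (p + j + 1) ≤ A' * p * M p / M (p + 1))
    (m : ℕ → ℝ) (hm : ∀ p, m p = M (p + 1) / M p)
    (hmmono : Monotone m) (hmsum : Summable fun p => 1 / m p)
    (hmtop : Filter.Tendsto m Filter.atTop Filter.atTop)
    (l : ℕ → ℝ) (hlpos : ∀ p, 0 < l p) (hlanti : StrictAnti l)
    (hl0 : Filter.Tendsto l Filter.atTop (nhds 0)) :
    ∀ k : ℝ, 0 < k → ∃ Ck : ℝ, 0 < Ck ∧ ∀ ζ : ℂ,
      ‖∏' p : ℕ, (1 + (l p : ℂ) ^ 2 * ζ ^ 2 / (m p : ℂ) ^ 2)‖ ≤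
        Ck * Real.exp (assocFn M (k * ‖ζ‖)) :=
  canonical_product_upper_bound_Roumieu_general M hMpos hM0 hM2 hM3 m hm hmmono hmsum hmtop l hl0
end

section
/- Let L > 0 and define the entire function P_L(ζ) := ∏_{p=1}^∞ (1 + L²ζ²/m_p²), and let a_p := (iteratedDeriv p P_L 0)/p! be its p-th Taylor coefficient at 0. Then there exist constants C > 0 and L₂ > 0 such that |a_p| ≤ C · L₂^p / M_p for all p ∈ ℕ. -/
/-!
Cauchy's estimate on the circle `‖z‖ = m p / L`. On it the factor of index `i` of the product
has modulus at most `1 + (m p / m i) ^ 2`. For `i < p` this is at most `2 (m p / m i) ^ 2`, which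
gives `2 ^ p (m p ^ p / M p) ^ 2`; for `i ≥ p` it is at most `exp (m p / m i)`, and (M.3) bounds
`m p * ∑_{i ≥ p} 1 / m i` by `A' p`. Dividing by the radius to the power `p` leaves
`(2 L) ^ p m p ^ p e ^ (A' p) / M p ^ 2`, and (M.2) gives
`m p ^ p ≤ M (2 p) / M p ≤ A H ^ (2 p) M p`.
-/

open Complex Finset Filter Metric

section InfiniteProduct

variable {R : Type*} [NormedCommRing R] [NormOneClass R] [CompleteSpace R]

theorem norm_tprod_one_add_le_exp_tsum {ι : Type*} {f : ι → R} (hf : Summable (‖f ·‖)) :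
    ‖∏' i, (1 + f i)‖ ≤ Real.exp (∑' i, ‖f i‖) := by
  refine le_of_tendsto' (Tendsto.norm (multipliable_one_add_of_summable hf).hasProd) fun s => ?_
  calc ‖∏ i ∈ s, (1 + f i)‖ ≤ ∏ i ∈ s, Real.exp ‖f i‖ := by
        refine (Finset.norm_prod_le _ _).trans (prod_le_prod (fun _ _ => norm_nonneg _) fun i _ => ?_)
        calc ‖1 + f i‖ ≤ ‖f i‖ + 1 := by simpa [add_comm] using norm_add_le (1 : R) (f i)
          _ ≤ Real.exp ‖f i‖ := Real.add_one_le_exp _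
    _ = Real.exp (∑ i ∈ s, ‖f i‖) := (Real.exp_sum _ _).symm
    _ ≤ Real.exp (∑' i, ‖f i‖) := Real.exp_le_exp.2 (hf.sum_le_tsum s fun i _ => norm_nonneg _)

theorem norm_tprod_one_add_le_prod_mul_exp {f : ℕ → R} (hf : Summable (‖f ·‖)) (k : ℕ) :
    ‖∏' i, (1 + f i)‖ ≤ (∏ i ∈ range k, (1 + ‖f i‖)) * Real.exp (∑' i, ‖f (i + k)‖) := by
  have htail : Summable fun i => ‖f (i + k)‖ := (summable_nat_add_iff k).2 hf
  rw [← Multipliable.prod_mul_tprod_nat_mul' (f := fun i => 1 + f i)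
    (multipliable_one_add_of_summable htail)]
  refine (norm_mul_le _ _).trans (mul_le_mul ?_ (norm_tprod_one_add_le_exp_tsum htail)
    (norm_nonneg _) (prod_nonneg fun _ _ => by positivity))
  refine (Finset.norm_prod_le _ _).trans (prod_le_prod (fun _ _ => norm_nonneg _) fun i _ => ?_)
  simpa using norm_add_le (1 : R) (f i)

end InfiniteProduct

theorem differentiable_tprod_one_add_mul {ι : Type*} {c : ι → ℂ} (hc : Summable (‖c ·‖)) :
    Differentiable ℂ fun z => ∏' i, (1 + c i * z) := by
  intro z
  set r := ‖z‖ + 1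
  have hz : z ∈ ball (0 : ℂ) r := by simp [r]
  have hprod := Summable.hasProdLocallyUniformlyOn_one_add (f := fun i w => c i * w)
    (K := ball (0 : ℂ) r) isOpen_ball (hc.mul_right r) (Eventually.of_forall fun i w hw => ?_)
    fun i => by fun_prop
  · refine (TendstoLocallyUniformlyOn.differentiableOn hprod
      (Eventually.of_forall fun s => ?_) isOpen_ball).differentiableAt (isOpen_ball.mem_nhds hz)
    exact (Differentiable.fun_finsetProd fun i _ => by fun_prop).differentiableOn
  · rw [norm_mul]
    exact mul_le_mul_of_nonneg_left (mem_ball_zero_iff.1 hw).le (norm_nonneg _)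

section WeightSequence

variable {m : ℕ → ℝ}

theorem pow_mul_prod_range_le_prod_range_two_mul (hm : ∀ i, 0 ≤ m i) (hmono : Monotone m)
    (p : ℕ) : m p ^ p * ∏ i ∈ range p, m i ≤ ∏ i ∈ range (2 * p), m i := by
  rw [two_mul, prod_range_add, mul_comm]
  refine mul_le_mul_of_nonneg_left ?_ (prod_nonneg fun i _ => hm i)
  simpa using prod_le_prod (s := range p) (fun _ _ => hm p) fun i _ => hmono (Nat.le_add_right p i)

theorem summable_div_sq (hm : ∀ i, 0 < m i) (hmono : Monotone m)
    (hsum : Summable fun i => 1 / m i) (c : ℝ) : Summable fun i => (c / m i) ^ 2 := by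
  refine (hsum.mul_left (c ^ 2 / m 0)).of_nonneg_of_le (fun _ => sq_nonneg _) fun i => ?_
  have hi : 1 / m i ≤ 1 / m 0 := one_div_le_one_div_of_le (hm 0) (hmono (Nat.zero_le i))
  calc (c / m i) ^ 2 = c ^ 2 * (1 / m i) * (1 / m i) := by ring
    _ ≤ c ^ 2 * (1 / m 0) * (1 / m i) := by gcongr; exact (one_div_pos.2 (hm i)).le
    _ = c ^ 2 / m 0 * (1 / m i) := by ring

theorem prod_range_one_add_div_sq_le (hm : ∀ i, 0 < m i) (hmono : Monotone m) (p : ℕ) :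
    ∏ i ∈ range p, (1 + (m p / m i) ^ 2) ≤ 2 ^ p * (m p ^ p / ∏ i ∈ range p, m i) ^ 2 := by
  calc ∏ i ∈ range p, (1 + (m p / m i) ^ 2) ≤ ∏ i ∈ range p, (2 * (m p / m i) ^ 2) := by
        refine prod_le_prod (fun _ _ => by positivity) fun i hi => ?_
        have : 1 ≤ m p / m i := (one_le_div (hm i)).2 (hmono (mem_range.1 hi).le)
        nlinarith
    _ = 2 ^ p * (m p ^ p / ∏ i ∈ range p, m i) ^ 2 := by
        rw [prod_mul_distrib, prod_pow, prod_div_distrib, prod_const, prod_const, card_range]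

theorem tsum_div_sq_le (hm : ∀ i, 0 < m i) (hmono : Monotone m)
    (hsum : Summable fun i => 1 / m i) (p : ℕ) :
    ∑' i, (m p / m (i + p)) ^ 2 ≤ m p * ∑' i, 1 / m (i + p) := by
  rw [← tsum_mul_left]
  refine ((summable_nat_add_iff p).2 (summable_div_sq hm hmono hsum (m p))).tsum_le_tsum
    (fun i => ?_) (((summable_nat_add_iff p).2 hsum).mul_left _)
  have hle : m p / m (i + p) ≤ 1 := (div_le_one (hm _)).2 (hmono (Nat.le_add_left p i))
  have h0 : 0 ≤ m p / m (i + p) := (div_pos (hm p) (hm _)).le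
  rw [mul_one_div]
  nlinarith

end WeightSequence

section ConditionsOnM

variable {M m : ℕ → ℝ}

theorem eq_prod_range_of_ratio (hMpos : ∀ p, 0 < M p) (hM0 : M 0 = 1)
    (hm : ∀ p, m p = M (p + 1) / M p) (p : ℕ) : M p = ∏ i ∈ range p, m i := by
  induction p with
  | zero => simp [hM0]
  | succ p ih => rw [prod_range_succ, ← ih, hm]; field_simp [(hMpos p).ne']

theorem pow_le_of_moderateGrowth (hMpos : ∀ p, 0 < M p) (hM0 : M 0 = 1)
    (hm : ∀ p, m p = M (p + 1) / M p) (hmono : Monotone m) {A H : ℝ}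
    (hM2 : ∀ p q : ℕ, q ≤ p → M p ≤ A * H ^ p * M q * M (p - q)) (p : ℕ) :
    m p ^ p ≤ A * H ^ (2 * p) * M p := by
  have hmpos (i : ℕ) : 0 ≤ m i := by rw [hm]; exact (div_pos (hMpos _) (hMpos _)).le
  have h := pow_mul_prod_range_le_prod_range_two_mul hmpos hmono p
  simp only [← eq_prod_range_of_ratio hMpos hM0 hm] at h
  have h2 := hM2 (2 * p) p (by omega)
  rw [show 2 * p - p = p by omega] at h2
  exact le_of_mul_le_mul_right (h.trans h2) (hMpos p)

theorem mul_tsum_one_div_le_of_strongNonQuasianalytic (hMpos : ∀ p, 0 < M p)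
    (hm : ∀ p, m p = M (p + 1) / M p) {A' : ℝ} {p : ℕ}
    (hM3 : ∑' j : ℕ, M (p + j) / M (p + j + 1) ≤ A' * p * M p / M (p + 1)) :
    m p * ∑' i, 1 / m (i + p) ≤ A' * p := by
  have hsum_eq : ∑' i, 1 / m (i + p) = ∑' j, M (p + j) / M (p + j + 1) :=
    tsum_congr fun j => by rw [hm, one_div_div, add_comm j p]
  rw [hsum_eq, hm p]
  calc M (p + 1) / M p * ∑' j, M (p + j) / M (p + j + 1)
      ≤ M (p + 1) / M p * (A' * p * M p / M (p + 1)) :=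
        mul_le_mul_of_nonneg_left hM3 (div_pos (hMpos _) (hMpos _)).le
    _ = A' * p := by field_simp [(hMpos p).ne', (hMpos (p + 1)).ne']

end ConditionsOnM

noncomputable def weightProduct (m : ℕ → ℝ) (L : ℝ) (ζ : ℂ) : ℂ :=
  ∏' i, (1 + (L : ℂ) ^ 2 * ζ ^ 2 / (m i : ℂ) ^ 2)

section WeightProduct

variable {m : ℕ → ℝ} {L : ℝ}

theorem norm_weightProduct_factor (hm : ∀ i, 0 < m i) (hL : 0 < L) (i : ℕ) (z : ℂ) :
    ‖(L : ℂ) ^ 2 * z ^ 2 / (m i : ℂ) ^ 2‖ = (L * ‖z‖ / m i) ^ 2 := by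
  simp only [Complex.norm_div, Complex.norm_mul, norm_pow, norm_real, Real.norm_eq_abs,
    abs_of_pos hL, abs_of_pos (hm i)]
  ring

theorem differentiable_weightProduct (hm : ∀ i, 0 < m i) (hmono : Monotone m)
    (hsum : Summable fun i => 1 / m i) (L : ℝ) : Differentiable ℂ (weightProduct m L) := by
  have hc : Summable fun i => ‖(L : ℂ) ^ 2 / (m i : ℂ) ^ 2‖ := by
    simpa [div_pow, abs_of_pos (hm _)] using summable_div_sq hm hmono hsum L
  have hcomp : weightProduct m L =
      (fun w => ∏' i, (1 + (L : ℂ) ^ 2 / (m i : ℂ) ^ 2 * w)) ∘ fun ζ => ζ ^ 2 :=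
    funext fun ζ => tprod_congr fun i => by ring
  rw [hcomp]
  exact (differentiable_tprod_one_add_mul hc).comp (differentiable_id.pow 2)

theorem norm_weightProduct_le (hm : ∀ i, 0 < m i) (hmono : Monotone m)
    (hsum : Summable fun i => 1 / m i) (hL : 0 < L) (p : ℕ) {z : ℂ} (hz : ‖z‖ = m p / L) :
    ‖weightProduct m L z‖ ≤
      2 ^ p * (m p ^ p / ∏ i ∈ range p, m i) ^ 2 * Real.exp (m p * ∑' i, 1 / m (i + p)) := by
  have hfactor (i : ℕ) : ‖(L : ℂ) ^ 2 * z ^ 2 / (m i : ℂ) ^ 2‖ = (m p / m i) ^ 2 := by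
    rw [norm_weightProduct_factor hm hL, hz, mul_div_cancel₀ _ hL.ne']
  have hf : Summable fun i => ‖(L : ℂ) ^ 2 * z ^ 2 / (m i : ℂ) ^ 2‖ := by
    simpa only [hfactor] using summable_div_sq hm hmono hsum (m p)
  refine (norm_tprod_one_add_le_prod_mul_exp hf p).trans ?_
  simp only [hfactor]
  gcongr
  · exact prod_range_one_add_div_sq_le hm hmono p
  · exact tsum_div_sq_le hm hmono hsum p

theorem norm_iteratedDeriv_weightProduct_div_factorial_le (hm : ∀ i, 0 < m i)
    (hmono : Monotone m) (hsum : Summable fun i => 1 / m i) (hL : 0 < L) (p : ℕ) :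
    ‖iteratedDeriv p (weightProduct m L) 0‖ / p.factorial ≤
      (2 * L) ^ p * m p ^ p / (∏ i ∈ range p, m i) ^ 2 *
        Real.exp (m p * ∑' i, 1 / m (i + p)) := by
  have hr : 0 < m p / L := div_pos (hm p) hL
  have hcauchy := norm_iteratedDeriv_le_of_forall_mem_sphere_norm_le p hr
    (differentiable_weightProduct hm hmono hsum L).diffContOnCl
    fun z hz => norm_weightProduct_le hm hmono hsum hL p (mem_sphere_zero_iff_norm.1 hz)
  rw [div_le_iff₀ (by positivity)]
  refine hcauchy.trans (le_of_eq ?_)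
  have hprod : ∏ i ∈ range p, m i ≠ 0 := (prod_pos fun i _ => hm i).ne'
  rw [div_pow (m p) L, mul_pow]
  field_simp

end WeightProduct

theorem taylor_coeff_bound_Beurling_general
    (M : ℕ → ℝ) (hMpos : ∀ p, 0 < M p) (hM0 : M 0 = 1)
    (hM2 : ∃ A H : ℝ, 0 < A ∧ 0 < H ∧
      ∀ p q : ℕ, q ≤ p → M p ≤ A * H ^ p * M q * M (p - q))
    (hM3 : ∃ A' : ℝ, 0 < A' ∧ ∀ p : ℕ, 1 ≤ p →
      ∑' j : ℕ, M (p + j) / M (p + j + 1) ≤ A' * p * M p / M (p + 1))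
    (m : ℕ → ℝ) (hm : ∀ p, m p = M (p + 1) / M p)
    (hmmono : Monotone m) (hmsum : Summable fun p => 1 / m p)
    (L : ℝ) (hL : 0 < L)
    (PL : ℂ → ℂ) (hPL : ∀ ζ, PL ζ = ∏' p : ℕ, (1 + (L : ℂ) ^ 2 * ζ ^ 2 / (m p : ℂ) ^ 2))
    (a : ℕ → ℂ) (ha : ∀ p, a p = iteratedDeriv p PL 0 / (p.factorial : ℂ)) :
    ∃ C L₂ : ℝ, 0 < C ∧ 0 < L₂ ∧ ∀ p : ℕ,
      ‖a p‖ ≤ C * L₂ ^ p / M p := by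
  obtain ⟨A, H, hA, hH, hM2⟩ := hM2
  obtain ⟨A', -, hM3⟩ := hM3
  have hmpos (i : ℕ) : 0 < m i := by rw [hm]; exact div_pos (hMpos _) (hMpos _)
  refine ⟨A + 1, 2 * L * H ^ 2 * Real.exp A', by positivity, by positivity, fun p => ?_⟩
  rcases Nat.eq_zero_or_pos p with rfl | hp
  · simpa [ha, hPL, hM0] using hA.le
  have htail := mul_tsum_one_div_le_of_strongNonQuasianalytic hMpos hm (hM3 p hp)
  have hpow := pow_le_of_moderateGrowth hMpos hM0 hm hmmono hM2 p
  calc ‖a p‖ = ‖iteratedDeriv p (weightProduct m L) 0‖ / p.factorial := by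
        rw [ha, show PL = weightProduct m L from funext hPL, norm_div, Complex.norm_natCast]
    _ ≤ (2 * L) ^ p * m p ^ p / M p ^ 2 * Real.exp (A' * p) := by
        rw [eq_prod_range_of_ratio hMpos hM0 hm p]
        refine (norm_iteratedDeriv_weightProduct_div_factorial_le hmpos hmmono hmsum hL p).trans ?_
        have := hmpos p
        gcongr
    _ ≤ (2 * L) ^ p * (A * H ^ (2 * p) * M p) / M p ^ 2 * Real.exp (A' * p) := by gcongr
    _ = A * (2 * L * H ^ 2 * Real.exp A') ^ p / M p := by
        rw [mul_comm A' p, Real.exp_nat_mul]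
        field_simp [(hMpos p).ne']
        ring
    _ ≤ (A + 1) * (2 * L * H ^ 2 * Real.exp A') ^ p / M p := by
        have := hMpos p
        gcongr
        linarith

/-- Let `(M_p)_{p≥0}` be a sequence of positive reals with `M_0 = 1` satisfying Komatsu's
conditions (M.1), (M.2), (M.3), and `m_p := M_p/M_{p-1}` (here `m p` denotes `m_{p+1}`).
Let `L > 0`, let `P_L(ζ) := ∏_{p=1}^∞ (1 + L²ζ²/m_p²)` (an entire function), and let
`a_p := (iteratedDeriv p P_L 0)/p!` be its Taylor coefficients at `0`.  Then there exist
`C > 0` and `L₂ > 0` with `|a_p| ≤ C · L₂^p / M_p` for all `p ∈ ℕ`. -/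
theorem taylor_coeff_bound_Beurling
    (M : ℕ → ℝ) (hMpos : ∀ p, 0 < M p) (hM0 : M 0 = 1)
    (hM1 : ∀ p : ℕ, (M (p + 1)) ^ 2 ≤ M p * M (p + 2))
    (hM2 : ∃ A H : ℝ, 0 < A ∧ 0 < H ∧
      ∀ p q : ℕ, q ≤ p → M p ≤ A * H ^ p * M q * M (p - q))
    (hM3 : ∃ A' : ℝ, 0 < A' ∧ ∀ p : ℕ, 1 ≤ p →
      ∑' j : ℕ, M (p + j) / M (p + j + 1) ≤ A' * p * M p / M (p + 1))
    (m : ℕ → ℝ) (hm : ∀ p, m p = M (p + 1) / M p)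
    (hmmono : Monotone m) (hmsum : Summable fun p => 1 / m p)
    (hmtop : Filter.Tendsto m Filter.atTop Filter.atTop)
    (L : ℝ) (hL : 0 < L)
    (PL : ℂ → ℂ) (hPL : ∀ ζ, PL ζ = ∏' p : ℕ, (1 + (L : ℂ) ^ 2 * ζ ^ 2 / (m p : ℂ) ^ 2))
    (a : ℕ → ℂ) (ha : ∀ p, a p = iteratedDeriv p PL 0 / (p.factorial : ℂ)) :
    ∃ C L₂ : ℝ, 0 < C ∧ 0 < L₂ ∧ ∀ p : ℕ,
      ‖a p‖ ≤ C * L₂ ^ p / M p :=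
  taylor_coeff_bound_Beurling_general M hMpos hM0 hM2 hM3 m hm hmmono hmsum L hL PL hPL a ha
end

section
/- Let (L_p)_{p≥1} be a strictly decreasing sequence of positive real numbers with L_p → 0, define the entire function P(ζ) := ∏_{p=1}^∞ (1 + L_p²ζ²/m_p²), and let a_p := (iteratedDeriv p P 0)/p! be its p-th Taylor coefficient at 0. Then for every k > 0 there exists a constant C_k > 0 such that |a_p| ≤ C_k · k^p / M_p for all p ∈ ℕ. -/
/-!
`P` is entire because `∑ (L_q / m_q)² < ∞`, so Cauchy's estimate on the circle of radius
`r = m_p / ε` bounds `|a_p|` by `max_{|ζ| = r} |P ζ| / r ^ p`. Once `L_q ≤ ε / 2` for `q > p`, the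
factors with `q > p` contribute at most `exp (A' (p + 1) / 4)` by (M.3), while monotonicity of
`m` bounds the factors with `q ≤ p` by `∏ (1 + L_q² / ε²) · (m_p ^ (p + 1) / M_{p+1})²`.
Together with `m_p ^ p ≤ M_{2p} / M_p ≤ A H^{2p} M_p` from (M.2) this gives
`|a_p| ≤ C (2 e^{A'/4} H² ε) ^ p / M_p`, and `ε` is chosen to make the base equal to `k`; the
finitely many `p` before `L_q ≤ ε / 2` sets in only enlarge the constant.
-/

open Filter Finset Metric
open scoped Topology

section InfiniteProduct

variable {R : Type*} [NormedCommRing R] [NormOneClass R] [CompleteSpace R]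

theorem norm_tprod_one_add_le {w : ℕ → R} (hw : Summable (‖w ·‖)) (n : ℕ) :
    ‖∏' q, (1 + w q)‖ ≤ (∏ q ∈ range n, (1 + ‖w q‖)) * Real.exp (∑' q, ‖w (q + n)‖) := by
  have hlim := ((multipliable_one_add_of_summable hw).hasProd.tendsto_prod_nat).norm
  refine le_of_tendsto hlim (eventually_atTop.2 ⟨n, fun N hN => ?_⟩)
  obtain ⟨k, rfl⟩ := Nat.exists_eq_add_of_le hN
  calc ‖∏ q ∈ range (n + k), (1 + w q)‖
      ≤ ∏ q ∈ range (n + k), (1 + ‖w q‖) :=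
        (Finset.norm_prod_le _ _).trans (prod_le_prod (fun _ _ => norm_nonneg _)
          fun q _ => (norm_add_le _ _).trans_eq (by rw [norm_one]))
    _ = (∏ q ∈ range n, (1 + ‖w q‖)) * ∏ q ∈ range k, (1 + ‖w (q + n)‖) := by
        simp_rw [prod_range_add, add_comm n]
    _ ≤ (∏ q ∈ range n, (1 + ‖w q‖)) * Real.exp (∑ q ∈ range k, ‖w (q + n)‖) := by
        gcongr
        exact Real.prod_one_add_le_exp_sum _ fun _ => norm_nonneg _
    _ ≤ _ := by
        gcongr
        exact ((summable_nat_add_iff n).2 hw).sum_le_tsum _ fun _ _ => norm_nonneg _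

end InfiniteProduct

theorem differentiable_tprod_one_add_mul_pow {c : ℕ → ℂ} (hc : Summable (‖c ·‖)) (d : ℕ) :
    Differentiable ℂ fun ζ => ∏' q, (1 + c q * ζ ^ d) := by
  intro z
  have hprod := (hc.mul_right ((‖z‖ + 1) ^ d)).hasProdLocallyUniformlyOn_nat_one_add
    (f := fun q ζ => c q * ζ ^ d) (isOpen_ball (x := 0) (ε := ‖z‖ + 1))
    (Eventually.of_forall fun q ζ hζ => ?_) (fun q => by fun_prop)
  · refine (hprod.differentiableOn (Eventually.of_forall fun s => ?_) isOpen_ball).differentiableAt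
      (isOpen_ball.mem_nhds (by simp))
    simpa [Finset.prod_fn] using DifferentiableOn.finsetProd (fun _ _ ↦ by fun_prop)
  · rw [mem_ball_zero_iff] at hζ
    rw [norm_mul, norm_pow]
    gcongr

theorem exists_pos_forall_norm_le_of_eventually {E : Type*} [NormedAddCommGroup E]
    {f : ℕ → E} {g : ℕ → ℝ} (hg : ∀ p, 0 < g p) {C : ℝ}
    (h : ∀ᶠ p in atTop, ‖f p‖ ≤ C * g p) : ∃ C' > 0, ∀ p, ‖f p‖ ≤ C' * g p := by
  have hO : f =O[cofinite] g := Asymptotics.IsBigO.of_bound C <| by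
    rw [Nat.cofinite_eq_atTop]
    filter_upwards [h] with p hp
    rwa [Real.norm_of_nonneg (hg p).le]
  obtain ⟨C', hC'⟩ := (Asymptotics.isBigO_cofinite_iff fun p hp => absurd hp (hg p).ne').1 hO
  refine ⟨max C' 1, lt_max_of_lt_right one_pos, fun p => (hC' p).trans ?_⟩
  rw [Real.norm_of_nonneg (hg p).le]
  exact mul_le_mul_of_nonneg_right (le_max_left _ _) (hg p).le

section WeightSequence

variable {M m : ℕ → ℝ}

theorem eq_mul_prod_Ico_of_succ_eq_mul (hstep : ∀ p, M (p + 1) = m p * M p) (p n : ℕ) :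
    M (p + n) = M p * ∏ q ∈ Ico p (p + n), m q := by
  induction n with
  | zero => simp
  | succ n ih => rw [← add_assoc, hstep, ih, prod_Ico_succ_top (by omega)]; ring

theorem pow_le_prod_Ico_of_monotone (hmono : Monotone m) {p : ℕ} (hp : 0 ≤ m p) (n : ℕ) :
    m p ^ n ≤ ∏ q ∈ Ico p (p + n), m q :=
  calc m p ^ n = ∏ _q ∈ Ico p (p + n), m p := by simp
    _ ≤ _ := prod_le_prod (fun _ _ => hp) fun _ hq => hmono (mem_Ico.1 hq).1

theorem pow_le_of_moderate_growth (hMpos : ∀ p, 0 < M p) (hstep : ∀ p, M (p + 1) = m p * M p)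
    (hmono : Monotone m) (hmnonneg : ∀ p, 0 ≤ m p) {A H : ℝ}
    (hM2 : ∀ p q : ℕ, q ≤ p → M p ≤ A * H ^ p * M q * M (p - q)) (p : ℕ) :
    m p ^ p ≤ A * H ^ (2 * p) * M p := by
  have h := hM2 (p + p) p (by omega)
  rw [eq_mul_prod_Ico_of_succ_eq_mul hstep, Nat.add_sub_cancel] at h
  refine le_of_mul_le_mul_left ?_ (hMpos p)
  calc M p * m p ^ p ≤ M p * ∏ q ∈ Ico p (p + p), m q :=
        mul_le_mul_of_nonneg_left (pow_le_prod_Ico_of_monotone hmono (hmnonneg p) p) (hMpos p).le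
    _ ≤ A * H ^ (p + p) * M p * M p := h
    _ = M p * (A * H ^ (2 * p) * M p) := by rw [two_mul]; ring

theorem tsum_one_div_le_of_tsum_div_le (hm : ∀ p, m p = M (p + 1) / M p) {A' : ℝ}
    (hM3 : ∀ p : ℕ, 1 ≤ p → ∑' j : ℕ, M (p + j) / M (p + j + 1) ≤ A' * p * M p / M (p + 1))
    (p : ℕ) : ∑' j, 1 / m (j + (p + 1)) ≤ A' * ↑(p + 1) / m (p + 1) := by
  have hterm : ∀ j, M (p + 1 + j) / M (p + 1 + j + 1) = 1 / m (j + (p + 1)) := fun j => by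
    rw [hm, one_div_div, add_comm j]
  simpa only [hterm, hm, div_div_eq_mul_div] using hM3 (p + 1) (by omega)

theorem prod_one_add_mul_sq_le {t : ℕ → ℝ} (hmpos : ∀ p, 0 < m p) (hmono : Monotone m)
    (ht : ∀ q, 0 ≤ t q) (n : ℕ) :
    ∏ q ∈ range (n + 1), (1 + t q * (m n / m q) ^ 2) ≤
      (∏ q ∈ range (n + 1), (1 + t q)) * (m n ^ (n + 1) / ∏ q ∈ range (n + 1), m q) ^ 2 := by
  calc ∏ q ∈ range (n + 1), (1 + t q * (m n / m q) ^ 2)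
      ≤ ∏ q ∈ range (n + 1), (1 + t q) * (m n / m q) ^ 2 := by
        refine prod_le_prod (fun q _ => by have := ht q; positivity) fun q hq => ?_
        have h1 : 1 ≤ (m n / m q) ^ 2 :=
          one_le_pow₀ ((one_le_div (hmpos q)).2 (hmono (Nat.lt_succ_iff.1 (mem_range.1 hq))))
        nlinarith [ht q]
    _ = _ := by
        rw [prod_mul_distrib, prod_pow, prod_div_distrib, prod_const, card_range]

theorem tsum_sq_mul_sq_div_le (hmpos : ∀ p, 0 < m p) (hmono : Monotone m)
    (hsum : Summable fun q => 1 / m q) {l : ℕ → ℝ} {ε A' : ℝ} (hA' : 0 ≤ A') {p : ℕ}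
    (hl : ∀ q, p < q → (l q / ε) ^ 2 ≤ 1 / 4)
    (h3 : ∑' j, 1 / m (j + (p + 1)) ≤ A' * ↑(p + 1) / m (p + 1)) :
    ∑' j, (l (j + (p + 1)) / ε) ^ 2 * (m p / m (j + (p + 1))) ^ 2 ≤ A' * ↑(p + 1) / 4 := by
  have hterm : ∀ j, (l (j + (p + 1)) / ε) ^ 2 * (m p / m (j + (p + 1))) ^ 2 ≤
      m p / 4 * (1 / m (j + (p + 1))) := fun j => by
    have hq := hmpos (j + (p + 1))
    have hratio : m p / m (j + (p + 1)) ≤ 1 := (div_le_one hq).2 (hmono (by omega))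
    have hratio0 : 0 ≤ m p / m (j + (p + 1)) := (div_pos (hmpos p) hq).le
    calc (l (j + (p + 1)) / ε) ^ 2 * (m p / m (j + (p + 1))) ^ 2
        ≤ 1 / 4 * (m p / m (j + (p + 1))) := by
          rw [sq (m p / _)]
          gcongr
          · exact hl _ (by omega)
          · exact mul_le_of_le_one_left hratio0 hratio
      _ = m p / 4 * (1 / m (j + (p + 1))) := by ring
  have hmaj : Summable fun j => m p / 4 * (1 / m (j + (p + 1))) :=
    ((summable_nat_add_iff (p + 1)).2 hsum).mul_left _
  calc _ ≤ ∑' j, m p / 4 * (1 / m (j + (p + 1))) :=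
        (hmaj.of_nonneg_of_le (fun _ => by positivity) hterm).tsum_le_tsum hterm hmaj
    _ = m p / 4 * ∑' j, 1 / m (j + (p + 1)) := tsum_mul_left
    _ ≤ m p / 4 * (A' * ↑(p + 1) / m (p + 1)) := by have := hmpos p; gcongr
    _ = m p / m (p + 1) * (A' * ↑(p + 1) / 4) := by ring
    _ ≤ A' * ↑(p + 1) / 4 := mul_le_of_le_one_left (by positivity)
        ((div_le_one (hmpos _)).2 (hmono p.le_succ))

theorem prod_range_le_prod_range_mul_pow {b : ℕ → ℝ} {B : ℝ} {p₀ n : ℕ} (hb : ∀ q, 0 ≤ b q)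
    (hB : 1 ≤ B) (hbB : ∀ q, p₀ ≤ q → b q ≤ B) (hn : p₀ ≤ n) :
    ∏ q ∈ range n, b q ≤ (∏ q ∈ range p₀, b q) * B ^ n := by
  rw [← prod_range_mul_prod_Ico b hn]
  gcongr
  · exact prod_nonneg fun q _ => hb q
  calc ∏ q ∈ Ico p₀ n, b q ≤ ∏ _q ∈ Ico p₀ n, B :=
        prod_le_prod (fun q _ => hb q) fun q hq => hbB q (mem_Ico.1 hq).1
    _ = B ^ (n - p₀) := by rw [prod_const, Nat.card_Ico]
    _ ≤ B ^ n := pow_le_pow_right₀ hB (Nat.sub_le n p₀)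

end WeightSequence

theorem summable_sq_div_of_tendsto_zero {l m : ℕ → ℝ} (hl : Tendsto l atTop (𝓝 0))
    (hmpos : ∀ q, 0 < m q) (hsum : Summable fun q => 1 / m q) :
    Summable fun q => (l q / m q) ^ 2 := by
  refine hsum.of_norm_bounded_eventually_nat ?_
  have hl2 : Tendsto (fun q => l q ^ 2) atTop (𝓝 0) := by simpa using hl.pow 2
  filter_upwards [hl2.eventually_le_const one_pos,
    hsum.tendsto_atTop_zero.eventually_le_const one_pos] with q hlq hmq
  have := hmpos q
  calc ‖(l q / m q) ^ 2‖ = l q ^ 2 * (1 / m q) * (1 / m q) := by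
        rw [Real.norm_of_nonneg (sq_nonneg _)]; ring
    _ ≤ 1 * 1 * (1 / m q) := by gcongr
    _ = 1 / m q := by ring

theorem norm_tprod_one_add_sq_le_on_sphere {M m l : ℕ → ℝ}
    (hMprod : ∀ n, M n = ∏ q ∈ range n, m q) (hmpos : ∀ p, 0 < m p) (hmono : Monotone m)
    (hsum : Summable fun q => 1 / m q) (hc : Summable fun q => (l q / m q) ^ 2) {ε A' : ℝ}
    (hA' : 0 ≤ A') {p : ℕ} (hl : ∀ q, p < q → (l q / ε) ^ 2 ≤ 1 / 4)
    (h3 : ∑' j, 1 / m (j + (p + 1)) ≤ A' * ↑(p + 1) / m (p + 1)) {ζ : ℂ}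
    (hζ : ‖ζ‖ = m p / ε) :
    ‖∏' q, (1 + (((l q / m q) ^ 2 : ℝ) : ℂ) * ζ ^ 2)‖ ≤
      (∏ q ∈ range (p + 1), (1 + (l q / ε) ^ 2)) * (m p ^ p / M p) ^ 2 *
        Real.exp (A' * ↑(p + 1) / 4) := by
  have hnorm : ∀ q, ‖(((l q / m q) ^ 2 : ℝ) : ℂ) * ζ ^ 2‖ = (l q / m q) ^ 2 * ‖ζ‖ ^ 2 :=
    fun q => by rw [norm_mul, norm_pow, Complex.norm_real, Real.norm_of_nonneg (sq_nonneg _)]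
  have hw : ∀ q, ‖(((l q / m q) ^ 2 : ℝ) : ℂ) * ζ ^ 2‖ = (l q / ε) ^ 2 * (m p / m q) ^ 2 :=
    fun q => by rw [hnorm, hζ]; ring
  have hbridge : m p ^ (p + 1) / ∏ q ∈ range (p + 1), m q = m p ^ p / M p := by
    rw [prod_range_succ, ← hMprod, pow_succ, mul_div_mul_right _ _ (hmpos p).ne']
  refine (norm_tprod_one_add_le ((hc.mul_right (‖ζ‖ ^ 2)).congr fun q => (hnorm q).symm)
    (p + 1)).trans ?_
  simp only [hw]
  gcongr
  · rw [← hbridge]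
    exact prod_one_add_mul_sq_le hmpos hmono (fun _ => sq_nonneg _) p
  · exact tsum_sq_mul_sq_div_le hmpos hmono hsum hA' hl h3

theorem norm_iteratedDeriv_div_factorial_le {f : ℂ → ℂ} (hf : Differentiable ℂ f) {r B : ℝ}
    (hr : 0 < r) (hB : ∀ ζ : ℂ, ‖ζ‖ = r → ‖f ζ‖ ≤ B) (p : ℕ) :
    ‖iteratedDeriv p f 0 / p.factorial‖ ≤ B / r ^ p := by
  have h := Complex.norm_iteratedDeriv_le_of_forall_mem_sphere_norm_le p hr hf.diffContOnCl
    (c := 0) fun ζ hζ => hB ζ (mem_sphere_zero_iff_norm.1 hζ)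
  rw [norm_div, Complex.norm_natCast, div_le_iff₀ (by positivity)]
  exact h.trans_eq (by ring)

theorem mul_div_pow_le_of_pow_le {X K μ Mp A H A' ε : ℝ} {p : ℕ} (hX0 : 0 ≤ X)
    (hX : X ≤ K * 2 ^ (p + 1)) (hμ : 0 ≤ μ) (hMp : 0 < Mp) (hε : 0 < ε)
    (hpow : μ ^ p ≤ A * H ^ (2 * p) * Mp) :
    X * (μ ^ p / Mp) ^ 2 * Real.exp (A' * ↑(p + 1) / 4) / (μ / ε) ^ p ≤
      2 * A * Real.exp (A' / 4) * K * ((2 * Real.exp (A' / 4) * H ^ 2 * ε) ^ p / Mp) := by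
  have hexp : Real.exp (A' * ↑(p + 1) / 4) = Real.exp (A' / 4) * Real.exp (A' / 4) ^ p := by
    rw [← Real.exp_nat_mul, ← Real.exp_add]; push_cast; ring_nf
  calc _ = X * (Real.exp (A' / 4) * Real.exp (A' / 4) ^ p * ε ^ p) * μ ^ p / Mp ^ 2 := by
        rw [hexp, div_pow μ ε]; field_simp
    _ ≤ K * 2 ^ (p + 1) * (Real.exp (A' / 4) * Real.exp (A' / 4) ^ p * ε ^ p) *
          (A * H ^ (2 * p) * Mp) / Mp ^ 2 := by
        gcongr
        exact mul_nonneg (hX0.trans hX) (by positivity)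
    _ = _ := by field_simp; ring

theorem taylor_coeff_bound_Roumieu_general
    (M : ℕ → ℝ) (hMpos : ∀ p, 0 < M p) (hM0 : M 0 = 1)
    (hM2 : ∃ A H : ℝ, 0 < A ∧ 0 < H ∧
      ∀ p q : ℕ, q ≤ p → M p ≤ A * H ^ p * M q * M (p - q))
    (hM3 : ∃ A' : ℝ, 0 < A' ∧ ∀ p : ℕ, 1 ≤ p →
      ∑' j : ℕ, M (p + j) / M (p + j + 1) ≤ A' * p * M p / M (p + 1))
    (m : ℕ → ℝ) (hm : ∀ p, m p = M (p + 1) / M p)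
    (hmmono : Monotone m) (hmsum : Summable fun p => 1 / m p)
    (l : ℕ → ℝ)
    (hl0 : Filter.Tendsto l Filter.atTop (nhds 0))
    (P : ℂ → ℂ) (hP : ∀ ζ, P ζ = ∏' p : ℕ, (1 + (l p : ℂ) ^ 2 * ζ ^ 2 / (m p : ℂ) ^ 2))
    (a : ℕ → ℂ) (ha : ∀ p, a p = iteratedDeriv p P 0 / (p.factorial : ℂ)) :
    ∀ k : ℝ, 0 < k → ∃ Ck : ℝ, 0 < Ck ∧ ∀ p : ℕ,
      ‖a p‖ ≤ Ck * k ^ p / M p := by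
  obtain ⟨A, H, hA, hH, hM2⟩ := hM2
  obtain ⟨A', hA', hM3⟩ := hM3
  have hmpos : ∀ p, 0 < m p := fun p => by rw [hm]; exact div_pos (hMpos _) (hMpos _)
  have hstep : ∀ p, M (p + 1) = m p * M p := fun p => by rw [hm, div_mul_cancel₀ _ (hMpos p).ne']
  have hMprod : ∀ n, M n = ∏ q ∈ range n, m q := fun n =>
    (prod_range_induction m M hM0 n fun k _ => by rw [hstep, mul_comm]).symm
  have hc := summable_sq_div_of_tendsto_zero hl0 hmpos hmsum
  have hP' : P = fun ζ => ∏' q, (1 + (((l q / m q) ^ 2 : ℝ) : ℂ) * ζ ^ 2) := funext fun ζ => by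
    rw [hP]; congr! 2 with q; push_cast; ring
  have hdiff : Differentiable ℂ P :=
    hP' ▸ differentiable_tprod_one_add_mul_pow (hc.congr fun q =>
      ((Complex.norm_real _).trans (Real.norm_of_nonneg (sq_nonneg _))).symm) 2
  intro k hk
  obtain ⟨ε, hε, hεk⟩ : ∃ ε > 0, 2 * Real.exp (A' / 4) * H ^ 2 * ε = k :=
    ⟨k / (2 * Real.exp (A' / 4) * H ^ 2), by positivity, by field_simp⟩
  have hl2 : Tendsto (fun q => (l q / ε) ^ 2) atTop (𝓝 0) := by
    simpa using (hl0.div_const ε).pow 2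
  obtain ⟨p₀, hp₀⟩ :=
    eventually_atTop.1 (hl2.eventually_le_const (by norm_num : (0 : ℝ) < 1 / 4))
  refine (exists_pos_forall_norm_le_of_eventually (fun p => div_pos (pow_pos hk p) (hMpos p))
    (C := 2 * A * Real.exp (A' / 4) * ∏ q ∈ range p₀, (1 + (l q / ε) ^ 2))
    (eventually_atTop.2 ⟨p₀, fun p hp => ?_⟩)).imp
    fun C ⟨hC, hbound⟩ => ⟨hC, fun p => (hbound p).trans_eq (mul_div_assoc _ _ _).symm⟩
  have hsphere : ∀ ζ : ℂ, ‖ζ‖ = m p / ε → ‖P ζ‖ ≤ (∏ q ∈ range (p + 1), (1 + (l q / ε) ^ 2)) *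
      (m p ^ p / M p) ^ 2 * Real.exp (A' * ↑(p + 1) / 4) := by
    rw [hP']
    exact fun ζ => norm_tprod_one_add_sq_le_on_sphere hMprod hmpos hmmono hmsum hc hA'.le
      (fun q hq => hp₀ q (by omega)) (tsum_one_div_le_of_tsum_div_le hm hM3 p)
  calc ‖a p‖ ≤ _ :=
        ha p ▸ norm_iteratedDeriv_div_factorial_le hdiff (div_pos (hmpos p) hε) hsphere p
    _ ≤ _ := mul_div_pow_le_of_pow_le (by positivity)
          (prod_range_le_prod_range_mul_pow (fun q => by positivity) one_le_two
            (fun q hq => by linarith [hp₀ q hq]) (by omega)) (hmpos p).le (hMpos p) hε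
          (pow_le_of_moderate_growth hMpos hstep hmmono (fun q => (hmpos q).le) hM2 p)
    _ = _ := by rw [hεk]

/-- Let `(M_p)_{p≥0}` be a sequence of positive reals with `M_0 = 1` satisfying Komatsu's
conditions (M.1), (M.2), (M.3), and `m_p := M_p/M_{p-1}` (here `m p` denotes `m_{p+1}`).
Let `(L_p)` be a strictly decreasing sequence of positive reals tending to `0` (here `l p`
denotes `L_{p+1}`), let `P(ζ) := ∏_{p=1}^∞ (1 + L_p²ζ²/m_p²)` (an entire function), and let
`a_p := (iteratedDeriv p P 0)/p!` be its Taylor coefficients at `0`.  Then for every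
`k > 0` there exists `C_k > 0` with `|a_p| ≤ C_k · k^p / M_p` for all `p ∈ ℕ`. -/
theorem taylor_coeff_bound_Roumieu
    (M : ℕ → ℝ) (hMpos : ∀ p, 0 < M p) (hM0 : M 0 = 1)
    (hM1 : ∀ p : ℕ, (M (p + 1)) ^ 2 ≤ M p * M (p + 2))
    (hM2 : ∃ A H : ℝ, 0 < A ∧ 0 < H ∧
      ∀ p q : ℕ, q ≤ p → M p ≤ A * H ^ p * M q * M (p - q))
    (hM3 : ∃ A' : ℝ, 0 < A' ∧ ∀ p : ℕ, 1 ≤ p →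
      ∑' j : ℕ, M (p + j) / M (p + j + 1) ≤ A' * p * M p / M (p + 1))
    (m : ℕ → ℝ) (hm : ∀ p, m p = M (p + 1) / M p)
    (hmmono : Monotone m) (hmsum : Summable fun p => 1 / m p)
    (hmtop : Filter.Tendsto m Filter.atTop Filter.atTop)
    (l : ℕ → ℝ) (hlpos : ∀ p, 0 < l p) (hlanti : StrictAnti l)
    (hl0 : Filter.Tendsto l Filter.atTop (nhds 0))
    (P : ℂ → ℂ) (hP : ∀ ζ, P ζ = ∏' p : ℕ, (1 + (l p : ℂ) ^ 2 * ζ ^ 2 / (m p : ℂ) ^ 2))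
    (a : ℕ → ℂ) (ha : ∀ p, a p = iteratedDeriv p P 0 / (p.factorial : ℂ)) :
    ∀ k : ℝ, 0 < k → ∃ Ck : ℝ, 0 < Ck ∧ ∀ p : ℕ,
      ‖a p‖ ≤ Ck * k ^ p / M p :=
  taylor_coeff_bound_Roumieu_general M hMpos hM0 hM2 hM3 m hm hmmono hmsum l hl0 P hP a ha
end

section
/- Let L > 0, ā > 0 with L·ā < m_1, and define P_L(ζ) := ∏_{p=1}^∞ (1 + L²ζ²/m_p²) for ζ ∈ ℂ. Then: (i) the function s ↦ 1/P_L(s − i·ā) is Lebesgue integrable on ℝ (in particular P_L(s − i·ā) ≠ 0 for all real s); (ii) the function K : ℝ → ℂ defined by K(t) := (1/(2π)) ∫_ℝ e^{(ā + i·s)·t} / P_L(s − i·ā) ds is continuous; and (iii) |K(t)| ≤ C·e^{ā·t} for all t ∈ ℝ, where C := (1/(2π)) ∫_ℝ 1/|P_L(s − i·ā)| ds. -/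
open MeasureTheory

/-- The canonical product `P_L(ζ) := ∏_{p=1}^∞ (1 + L²ζ²/m_p²)`, where `m p` denotes
`m_{p+1}`. -/
noncomputable def PL (m : ℕ → ℝ) (L : ℝ) (ζ : ℂ) : ℂ :=
  ∏' p : ℕ, (1 + (L : ℂ) ^ 2 * ζ ^ 2 / (m p : ℂ) ^ 2)

/-! On the line `ζ = s - iā` the `p`-th factor of `P_L` is `1 + (u - iv)²` with `u = Ls/m_p`,
`v = Lā/m_p`, so its modulus is at least its real part `1 - v² + u² ≥ (1 - v²)(1 + u²)`. Since
`Lā < m_1 ≤ m_p`, every `1 - v²` lies in `(0, 1]`, and `∑ v²` converges, so `D := ∏ (1 - v²) > 0`.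
Keeping the growth of the first factor only gives `|P_L(s - iā)| ≥ D (1 + (Ls/m_1)²)`, whence
`1/P_L(s - iā)` is integrable and never vanishes. Finally
`K(t) = e^{āt}/(2π) · ∫ e^{ist}/P_L(s - iā) ds`, where the integral is continuous in `t` by
dominated convergence and bounded by `∫ 1/|P_L(s - iā)|` because `|e^{ist}| = 1`. -/

theorem hasProd_le_of_nonneg {ι α : Type*} [CommSemiring α] [PartialOrder α] [IsOrderedRing α]
    [TopologicalSpace α] [OrderClosedTopology α] {f g : ι → α} {a b : α}
    (h₀ : ∀ i, 0 ≤ f i) (h : ∀ i, f i ≤ g i) (hf : HasProd f a) (hg : HasProd g b) : a ≤ b :=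
  le_of_tendsto_of_tendsto' hf hg fun _ => Finset.prod_le_prod (fun i _ => h₀ i) fun i _ => h i

theorem Real.tprod_one_add_pos {ι : Type*} {f : ι → ℝ} (hf : Summable f) (h : ∀ i, -1 < f i) :
    0 < ∏' i, (1 + f i) := by
  rw [← Real.rexp_tsum_eq_tprod (fun i => by linarith [h i])
    (Real.summable_log_one_add_of_summable hf)]
  exact Real.exp_pos _

section LaplaceIntegral

open Complex

variable {g : ℝ → ℂ}

theorem integral_exp_add_I_mul_mul (a t : ℝ) :
    ∫ s : ℝ, exp ((a + I * s) * t) * g s = exp (a * t) * ∫ s : ℝ, exp (↑(s * t) * I) * g s := by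
  rw [← integral_const_mul]
  congr 1 with s
  rw [← mul_assoc, ← exp_add]
  push_cast
  ring_nf

theorem continuous_integral_exp_mul_I_mul (hg : Integrable g) :
    Continuous fun t : ℝ => ∫ s : ℝ, exp (↑(s * t) * I) * g s :=
  continuous_of_dominated (fun t => (by fun_prop : Continuous _).aestronglyMeasurable.mul hg.1)
    (fun t => .of_forall fun s => by rw [norm_mul, norm_exp_ofReal_mul_I, one_mul]) hg.norm
    (.of_forall fun s => by fun_prop)

theorem norm_integral_exp_mul_I_mul_le (t : ℝ) :
    ‖∫ s : ℝ, exp (↑(s * t) * I) * g s‖ ≤ ∫ s : ℝ, ‖g s‖ :=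
  (norm_integral_le_integral_norm _).trans_eq <| by
    simp only [norm_mul, norm_exp_ofReal_mul_I, one_mul]

end LaplaceIntegral

section CanonicalProduct

open Complex

theorem one_sub_sq_mul_one_add_sq_le_norm (L m a s : ℝ) :
    (1 - (L / m * a) ^ 2) * (1 + (L / m * s) ^ 2) ≤
      ‖1 + (L : ℂ) ^ 2 * ((s : ℂ) - I * a) ^ 2 / (m : ℂ) ^ 2‖ := by
  have hsq : (L : ℂ) ^ 2 * ((s : ℂ) - I * a) ^ 2 / (m : ℂ) ^ 2 =
      ((↑(L / m * s) : ℂ) - I * ↑(L / m * a)) ^ 2 := by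
    push_cast
    ring
  have hre : (1 + (L : ℂ) ^ 2 * ((s : ℂ) - I * a) ^ 2 / (m : ℂ) ^ 2).re =
      1 - (L / m * a) ^ 2 + (L / m * s) ^ 2 := by
    rw [hsq]
    simp only [add_re, one_re, sq, mul_re, sub_re, sub_im, ofReal_re, ofReal_im, I_re, I_im, mul_im]
    ring
  calc (1 - (L / m * a) ^ 2) * (1 + (L / m * s) ^ 2)
      ≤ 1 - (L / m * a) ^ 2 + (L / m * s) ^ 2 := by
        nlinarith [mul_nonneg (sq_nonneg (L / m * a)) (sq_nonneg (L / m * s))]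
    _ = _ := hre.symm
    _ ≤ _ := re_le_norm _

variable {m : ℕ → ℝ} {L : ℝ}

theorem measurable_PL : Measurable (PL m L) :=
  Measurable.tprod fun _ => by fun_prop

theorem multipliable_PL (hm : Summable fun p => 1 / m p ^ 2) (ζ : ℂ) :
    Multipliable fun p => 1 + (L : ℂ) ^ 2 * ζ ^ 2 / (m p : ℂ) ^ 2 :=
  Complex.multipliable_one_add_of_summable <|
    ((summable_ofReal.mpr hm).mul_left ((L : ℂ) ^ 2 * ζ ^ 2)).congr fun p => by
      push_cast
      ring

theorem summable_sq_div_mul (hm : Summable fun p => 1 / m p ^ 2) (a : ℝ) :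
    Summable fun p => (L / m p * a) ^ 2 :=
  (hm.mul_left ((L * a) ^ 2)).congr fun p => by ring

theorem tprod_one_sub_sq_div_mul_pos (hm : Summable fun p => 1 / m p ^ 2) {a : ℝ}
    (ha : ∀ p, (L / m p * a) ^ 2 < 1) : 0 < ∏' p, (1 - (L / m p * a) ^ 2) := by
  simp_rw [sub_eq_add_neg]
  exact Real.tprod_one_add_pos (summable_sq_div_mul hm a).neg fun p => neg_lt_neg (ha p)

theorem tprod_mul_le_norm_PL (hm : Summable fun p => 1 / m p ^ 2) {a : ℝ}
    (ha : ∀ p, (L / m p * a) ^ 2 < 1) (s : ℝ) :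
    (∏' p, (1 - (L / m p * a) ^ 2)) * (1 + (L / m 0 * s) ^ 2) ≤
      ‖PL m L ((s : ℂ) - I * (a : ℂ))‖ := by
  have hδ : HasProd (fun p => 1 - (L / m p * a) ^ 2) (∏' p, (1 - (L / m p * a) ^ 2)) := by
    simp_rw [sub_eq_add_neg]
    exact (Real.multipliable_one_add_of_summable (summable_sq_div_mul hm a).neg).hasProd
  rw [PL, (multipliable_PL hm _).norm_tprod]
  refine hasProd_le_of_nonneg (f := fun p => (1 - (L / m p * a) ^ 2) *
      if p = 0 then 1 + (L / m 0 * s) ^ 2 else 1) (fun p => ?_) (fun p => ?_)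
    (hδ.mul (hasProd_ite_eq 0 _)) (multipliable_PL hm _).norm.hasProd
  · have := ha p
    split_ifs <;> positivity
  · refine le_trans ?_ (one_sub_sq_mul_one_add_sq_le_norm L (m p) a s)
    split_ifs with hp
    · rw [hp]
    · have := ha p
      nlinarith [sq_nonneg (L / m p * s)]

theorem PL_sub_I_mul_ne_zero (hm : Summable fun p => 1 / m p ^ 2) {a : ℝ}
    (ha : ∀ p, (L / m p * a) ^ 2 < 1) (s : ℝ) : PL m L ((s : ℂ) - I * (a : ℂ)) ≠ 0 := by
  rw [← norm_pos_iff]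
  exact lt_of_lt_of_le (by positivity [tprod_one_sub_sq_div_mul_pos hm ha])
    (tprod_mul_le_norm_PL hm ha s)

theorem integrable_one_div_PL_sub_I_mul (hm : Summable fun p => 1 / m p ^ 2) {a : ℝ}
    (ha : ∀ p, (L / m p * a) ^ 2 < 1) (hL : L / m 0 ≠ 0) :
    Integrable fun s : ℝ => 1 / PL m L ((s : ℂ) - I * (a : ℂ)) := by
  have hD := tprod_one_sub_sq_div_mul_pos hm ha
  refine ((integrable_inv_one_add_sq.comp_mul_left' hL).const_mul
    (∏' p, (1 - (L / m p * a) ^ 2))⁻¹).mono' ?_ (.of_forall fun s => ?_)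
  · exact (measurable_const.div (measurable_PL.comp (by fun_prop))).aestronglyMeasurable
  · rw [norm_div, norm_one, ← mul_inv, ← one_div]
    exact one_div_le_one_div_of_le (by positivity) (tprod_mul_le_norm_PL hm ha s)

end CanonicalProduct

/-- Let `(m_p)_{p≥1}` be a nondecreasing sequence of positive reals with `∑ 1/m_p² < ∞`
(here `m p` denotes `m_{p+1}`).  Let `L > 0` and `ā > 0` with `L·ā < m_1`, and set
`P_L(ζ) := ∏_{p=1}^∞ (1 + L²ζ²/m_p²)`.  Then:
(i) `s ↦ 1/P_L(s − i·ā)` is Lebesgue integrable on `ℝ` (in particular `P_L(s − i·ā) ≠ 0`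
for all real `s`);
(ii) `K(t) := (1/(2π)) ∫_ℝ e^{(ā + i·s)·t} / P_L(s − i·ā) ds` is continuous on `ℝ`;
(iii) `|K(t)| ≤ C·e^{ā·t}` for all `t`, where `C := (1/(2π)) ∫_ℝ 1/|P_L(s − i·ā)| ds`. -/
theorem inverse_laplace_kernel_of_canonical_product
    (m : ℕ → ℝ) (hmpos : ∀ p, 0 < m p) (hmmono : Monotone m)
    (hmsum : Summable fun p => 1 / (m p) ^ 2)
    (L abar : ℝ) (hL : 0 < L) (habar : 0 < abar) (hLa : L * abar < m 0) :
    (Integrable (fun s : ℝ => 1 / PL m L ((s : ℂ) - Complex.I * (abar : ℂ)))) ∧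
    (∀ s : ℝ, PL m L ((s : ℂ) - Complex.I * (abar : ℂ)) ≠ 0) ∧
    (Continuous fun t : ℝ =>
      (1 / (2 * Real.pi) : ℂ) *
        ∫ s : ℝ, Complex.exp (((abar : ℂ) + Complex.I * (s : ℂ)) * (t : ℂ)) /
          PL m L ((s : ℂ) - Complex.I * (abar : ℂ))) ∧
    (∀ t : ℝ,
      ‖((1 / (2 * Real.pi) : ℂ) *
          ∫ s : ℝ, Complex.exp (((abar : ℂ) + Complex.I * (s : ℂ)) * (t : ℂ)) /
            PL m L ((s : ℂ) - Complex.I * (abar : ℂ)))‖ ≤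
        (1 / (2 * Real.pi) *
            ∫ s : ℝ, 1 / ‖PL m L ((s : ℂ) - Complex.I * (abar : ℂ))‖) *
          Real.exp (abar * t)) := by
  have ha : ∀ p, (L / m p * abar) ^ 2 < 1 := fun p => by
    have hLa_p : L * abar < m p := hLa.trans_le (hmmono (Nat.zero_le p))
    rw [div_mul_eq_mul_div]
    exact pow_lt_one₀ (by positivity [hmpos p]) ((div_lt_one (hmpos p)).2 hLa_p) two_ne_zero
  have hint := integrable_one_div_PL_sub_I_mul hmsum ha (div_ne_zero hL.ne' (hmpos 0).ne')
  simp_rw [div_eq_mul_one_div (Complex.exp _), integral_exp_add_I_mul_mul, norm_mul]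
  refine ⟨hint, PL_sub_I_mul_ne_zero hmsum ha,
    continuous_const.mul <| (Complex.continuous_exp.comp (by fun_prop)).mul
      (continuous_integral_exp_mul_I_mul hint), fun t => ?_⟩
  have hnorm_integral : ‖∫ s : ℝ, Complex.exp (↑(s * t) * Complex.I) *
      (1 / PL m L ((s : ℂ) - Complex.I * (abar : ℂ)))‖ ≤
        ∫ s : ℝ, 1 / ‖PL m L ((s : ℂ) - Complex.I * (abar : ℂ))‖ := by
    refine (norm_integral_exp_mul_I_mul_le t).trans_eq ?_
    simp only [norm_div, norm_one]
  have h2π : ‖(1 / (2 * Real.pi) : ℂ)‖ = 1 / (2 * Real.pi) := by simp [Real.pi_pos.le]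
  rw [h2π, ← Complex.ofReal_mul, Complex.norm_exp_ofReal]
  calc _ = 1 / (2 * Real.pi) * ‖∫ s : ℝ, Complex.exp (↑(s * t) * Complex.I) *
        (1 / PL m L ((s : ℂ) - Complex.I * (abar : ℂ)))‖ * Real.exp (abar * t) := by ring
    _ ≤ _ := by gcongr
end
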